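/- arXiv:1206.4004 — 9 statements merged into one kernel-verified Lean document; each statement's English description precedes it below -/
import Mathlib

section
/- The rational Bernstein operator reproduces the identity function: ∑_{k=0}^{n} x_k (γ_k + γ_{k-1}) x^k (1-x)^{n-k} = x·Q(x) for all x, where x_k = γ_{k-1}/(γ_{k-1}+γ_k) for 1 ≤ k ≤ n (with γ_n = 0 giving x_n = 1) and x_0 = 0. -/
/-! Each node weighted by its denominator is `x_k (γ_k + γ_{k-1}) = γ_{k-1}` (the denominator is
positive because `γ_{k-1} > 0` and `γ_k ≥ 0`), and the `k = 0` term vanishes, so after shifting the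
index the sum is `∑_{j<n} γ_j x^{j+1} (1-x)^{n-1-j} = x Q(x)`. -/

open Finset

theorem sum_range_succ_mul_pow_mul_pow_of_coeff_zero {R : Type*} [CommRing R] (c : ℕ → R)
    (hc : c 0 = 0) (n : ℕ) (x y : R) :
    ∑ k ∈ range (n + 1), c k * x ^ k * y ^ (n - k) =
      x * ∑ k ∈ range n, c (k + 1) * x ^ k * y ^ (n - 1 - k) := by
  rw [sum_range_succ', hc, zero_mul, zero_mul, add_zero, mul_sum]
  refine sum_congr rfl fun k _ => ?_
  rw [show n - (k + 1) = n - 1 - k by omega]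
  ring

theorem stmt5_general (n : ℕ) (γ : ℤ → ℝ)
    (htop : γ (n : ℤ) = 0)
    (hpos : ∀ k : ℕ, k ≤ n - 1 → 0 < γ (k : ℤ))
    (ξ : ℕ → ℝ) (hξ0 : ξ 0 = 0)
    (hξ : ∀ k : ℕ, 1 ≤ k → k ≤ n → ξ k = γ ((k : ℤ) - 1) / (γ ((k : ℤ) - 1) + γ (k : ℤ)))
    (Q : ℝ → ℝ)
    (hQ : ∀ x : ℝ, Q x = ∑ k ∈ Finset.range n, γ (k : ℤ) * x ^ k * (1 - x) ^ (n - 1 - k)) :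
    ∀ x : ℝ, ∑ k ∈ Finset.range (n + 1),
        ξ k * (γ (k : ℤ) + γ ((k : ℤ) - 1)) * x ^ k * (1 - x) ^ (n - k) = x * Q x := by
  intro x
  have hweight : ∀ k < n, ξ (k + 1) * (γ (k + 1 : ℕ) + γ ((k + 1 : ℕ) - 1)) = γ k := by
    intro k hk
    have hsucc : 0 ≤ γ (k + 1 : ℕ) := by
      rcases Nat.lt_or_ge (k + 1) n with h | h
      · exact (hpos (k + 1) (by omega)).le
      · rw [show k + 1 = n by omega, htop]
    have hden : γ k + γ (k + 1 : ℕ) ≠ 0 := (add_pos_of_pos_of_nonneg (hpos k (by omega)) hsucc).ne'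
    rw [hξ (k + 1) (by omega) hk]
    push_cast at hden ⊢
    rw [add_sub_cancel_right, add_comm (γ (k + 1)), div_mul_cancel₀ _ hden]
  rw [sum_range_succ_mul_pow_mul_pow_of_coeff_zero (fun k => ξ k * (γ k + γ (k - 1)))
    (by simp [hξ0]), hQ]
  congr 1
  exact sum_congr rfl fun k hk => by rw [hweight k (mem_range.mp hk)]

/-- The rational Bernstein operator reproduces the identity:
`∑_{k=0}^{n} ξ k * (γ k + γ (k-1)) * x^k (1-x)^(n-k) = x * Q x` for all `x`. -/
theorem stmt5 (n : ℕ) (hn : 1 ≤ n) (γ : ℤ → ℝ)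
    (hneg : γ (-1) = 0) (htop : γ (n : ℤ) = 0)
    (hpos : ∀ k : ℕ, k ≤ n - 1 → 0 < γ (k : ℤ))
    (ξ : ℕ → ℝ) (hξ0 : ξ 0 = 0)
    (hξ : ∀ k : ℕ, 1 ≤ k → k ≤ n → ξ k = γ ((k : ℤ) - 1) / (γ ((k : ℤ) - 1) + γ (k : ℤ)))
    (Q : ℝ → ℝ)
    (hQ : ∀ x : ℝ, Q x = ∑ k ∈ Finset.range n, γ (k : ℤ) * x ^ k * (1 - x) ^ (n - 1 - k)) :
    ∀ x : ℝ, ∑ k ∈ Finset.range (n + 1),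
        ξ k * (γ (k : ℤ) + γ ((k : ℤ) - 1)) * x ^ k * (1 - x) ^ (n - k) = x * Q x :=
  stmt5_general n γ htop hpos ξ hξ0 hξ Q hQ
end

section
/- For every s ≥ 1 and all x ∈ [0,1], Q(x)·(R_n(e_s)(x) − x^s) = x(1−x) ∑_{l=0}^{s−2} x^l ∑_{k=0}^{n−1} γ_k (x_{k+1}^{s−1−l} − x_k^{s−1−l}) x^k (1−x)^{n−1−k}. -/
/-!
Write `B_k = x^k (1-x)^(n-1-k)`, `U_m = ∑ γ_k x_{k+1}^m B_k` and `V_m = ∑ γ_k x_k^m B_k`, so that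
`Q = U_0`. Splitting `γ_k + γ_{k-1}` shows that the numerator of `R_n e_m` is `x U_m + (1-x) V_m`;
on the other hand, `x_{k+1} (γ_k + γ_{k+1}) = γ_k` and `x_0 = 0` make the numerator of `R_n e_{m+1}`
equal to `x U_m`. Comparing the two gives, for `a_m = U_m - x^m Q`, the first-order recurrence
`a_{m+1} = x a_m + (1-x) (U_{m+1} - V_{m+1})` with `a_0 = 0`, which unrolls to the claimed sum, and
`Q (R_n e_s - x^s) = x U_{s-1} - x^s Q = x a_{s-1}`.
-/

open Finset

namespace RationalBernstein

noncomputable def bernsteinComb (n : ℕ) (c : ℕ → ℝ) (x : ℝ) : ℝ :=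
  ∑ k ∈ range n, c k * x ^ k * (1 - x) ^ (n - 1 - k)

section BernsteinComb

variable {n : ℕ} {x : ℝ}

theorem bernsteinComb_congr {c d : ℕ → ℝ} (h : ∀ k < n, c k = d k) :
    bernsteinComb n c x = bernsteinComb n d x :=
  sum_congr rfl fun k hk => by rw [h k (mem_range.mp hk)]

theorem bernsteinComb_add (c d : ℕ → ℝ) :
    bernsteinComb n (fun k => c k + d k) x = bernsteinComb n c x + bernsteinComb n d x := by
  rw [bernsteinComb, bernsteinComb, bernsteinComb, ← sum_add_distrib]
  exact sum_congr rfl fun k _ => by ring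

theorem bernsteinComb_sub (c d : ℕ → ℝ) :
    bernsteinComb n (fun k => c k - d k) x = bernsteinComb n c x - bernsteinComb n d x := by
  rw [bernsteinComb, bernsteinComb, bernsteinComb, ← sum_sub_distrib]
  exact sum_congr rfl fun k _ => by ring

theorem bernsteinComb_succ_of_apply_zero {d : ℕ → ℝ} (h0 : d 0 = 0) :
    bernsteinComb (n + 1) d x = x * bernsteinComb n (fun k => d (k + 1)) x := by
  rw [bernsteinComb, sum_range_succ', h0, zero_mul, zero_mul, add_zero, bernsteinComb, mul_sum]
  refine sum_congr rfl fun k _ => ?_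
  rw [show n + 1 - 1 - (k + 1) = n - 1 - k by omega, pow_succ]
  ring

theorem bernsteinComb_succ_of_apply_last {d : ℕ → ℝ} (hlast : d n = 0) :
    bernsteinComb (n + 1) d x = (1 - x) * bernsteinComb n d x := by
  rw [bernsteinComb, sum_range_succ, hlast, zero_mul, zero_mul, add_zero, bernsteinComb, mul_sum]
  refine sum_congr rfl fun k hk => ?_
  rw [show n + 1 - 1 - k = n - 1 - k + 1 by have := mem_range.mp hk; omega, pow_succ]
  ring

theorem bernsteinComb_pos {c : ℕ → ℝ} (hn : 0 < n) (hc : ∀ k < n, 0 < c k)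
    (hx : x ∈ Set.Icc (0 : ℝ) 1) : 0 < bernsteinComb n c x := by
  obtain ⟨hx0, hx1⟩ := hx
  have h1x : 0 ≤ 1 - x := by linarith
  refine sum_pos' (fun k hk => ?_) ?_
  · have := hc k (mem_range.mp hk)
    positivity
  rcases hx1.lt_or_eq with hlt | rfl
  · refine ⟨0, mem_range.mpr hn, ?_⟩
    have := hc 0 hn
    have : 0 < 1 - x := by linarith
    simp only [pow_zero, mul_one]
    positivity
  · refine ⟨n - 1, mem_range.mpr (by omega), ?_⟩
    simpa using hc (n - 1) (by omega)

end BernsteinComb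

theorem eq_sum_pow_mul_of_succ_eq {R : Type*} [CommSemiring R] {a c : ℕ → R} {x : R}
    (h0 : a 0 = 0) (hsucc : ∀ m, a (m + 1) = x * a m + c (m + 1)) (m : ℕ) :
    a m = ∑ l ∈ range m, x ^ l * c (m - l) := by
  induction m with
  | zero => simp [h0]
  | succ m ih =>
    rw [hsucc, ih, sum_range_succ', mul_sum]
    simp only [Nat.add_sub_add_right, pow_succ, pow_zero, one_mul, Nat.sub_zero]
    exact congrArg (· + c (m + 1)) (sum_congr rfl fun l _ => by ring)

section Numerator

variable {n : ℕ} {γ : ℤ → ℝ} {ξ : ℕ → ℝ} (x : ℝ)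

theorem bernsteinComb_succ_mul_add_pred (g : ℕ → ℝ) (hneg : γ (-1) = 0) (htop : γ n = 0) :
    bernsteinComb (n + 1) (fun k => g k * (γ k + γ (k - 1))) x
      = x * bernsteinComb n (fun k => γ k * g (k + 1)) x
        + (1 - x) * bernsteinComb n (fun k => γ k * g k) x := by
  simp only [mul_add, bernsteinComb_add]
  rw [bernsteinComb_succ_of_apply_last (by simp [htop]),
    bernsteinComb_succ_of_apply_zero (by simp [hneg])]
  push_cast
  simp only [add_sub_cancel_right, mul_comm (g _)]
  ring

theorem numerator_pow_succ (hξ0 : ξ 0 = 0)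
    (hnode : ∀ k < n, ξ (k + 1) * (γ ((k : ℤ) + 1) + γ k) = γ k) (m : ℕ) :
    bernsteinComb (n + 1) (fun k => ξ k ^ (m + 1) * (γ k + γ (k - 1))) x
      = x * bernsteinComb n (fun k => γ k * ξ (k + 1) ^ m) x := by
  rw [bernsteinComb_succ_of_apply_zero (by simp [hξ0])]
  congr 1
  refine bernsteinComb_congr fun k hk => ?_
  push_cast
  rw [add_sub_cancel_right, pow_succ, mul_assoc, hnode k hk, mul_comm]

theorem numerator_pow_succ_sub (hneg : γ (-1) = 0) (htop : γ n = 0) (hξ0 : ξ 0 = 0)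
    (hnode : ∀ k < n, ξ (k + 1) * (γ ((k : ℤ) + 1) + γ k) = γ k) (m : ℕ) :
    bernsteinComb (n + 1) (fun k => ξ k ^ (m + 1) * (γ k + γ (k - 1))) x
        - x ^ (m + 1) * bernsteinComb n (fun k => γ k) x
      = x * (1 - x) * ∑ l ∈ range m,
          x ^ l * bernsteinComb n (fun k => γ k * (ξ (k + 1) ^ (m - l) - ξ k ^ (m - l))) x := by
  have hrec := eq_sum_pow_mul_of_succ_eq (x := x)
    (a := fun m => bernsteinComb n (fun k => γ k * ξ (k + 1) ^ m) x
      - x ^ m * bernsteinComb n (fun k => γ k) x)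
    (c := fun m => (1 - x) * bernsteinComb n (fun k => γ k * (ξ (k + 1) ^ m - ξ k ^ m)) x)
    (by simp) (fun m => ?_) m
  · rw [numerator_pow_succ x hξ0 hnode, mul_assoc, mul_sum]
    simp only [mul_left_comm (1 - x)]
    rw [← hrec]
    ring
  · -- the numerator of `R_n e_{m+1}` computed in two ways
    have h := (numerator_pow_succ x hξ0 hnode m).symm.trans
      (bernsteinComb_succ_mul_add_pred x (fun k => ξ k ^ (m + 1)) hneg htop)
    simp only [mul_sub, bernsteinComb_sub]
    linear_combination -h

end Numerator

end RationalBernstein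

open RationalBernstein

/-- For every `s ≥ 1` and all `x ∈ [0,1]`,
`Q x * (R_n (e_s) x - x^s)
  = x (1-x) ∑_{l=0}^{s-2} x^l ∑_{k=0}^{n-1} γ k (ξ (k+1)^(s-1-l) - ξ k^(s-1-l)) x^k (1-x)^(n-1-k)`. -/
theorem stmt6 (n : ℕ) (hn : 1 ≤ n) (γ : ℤ → ℝ)
    (hneg : γ (-1) = 0) (htop : γ (n : ℤ) = 0)
    (hpos : ∀ k : ℕ, k ≤ n - 1 → 0 < γ (k : ℤ))
    (ξ : ℕ → ℝ) (hξ0 : ξ 0 = 0)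
    (hξ : ∀ k : ℕ, 1 ≤ k → k ≤ n → ξ k = γ ((k : ℤ) - 1) / (γ ((k : ℤ) - 1) + γ (k : ℤ)))
    (Q : ℝ → ℝ)
    (hQ : ∀ x : ℝ, Q x = ∑ k ∈ Finset.range n, γ (k : ℤ) * x ^ k * (1 - x) ^ (n - 1 - k))
    (R : (ℝ → ℝ) → ℝ → ℝ)
    (hR : ∀ f : ℝ → ℝ, ∀ x : ℝ, R f x =
      (∑ k ∈ Finset.range (n + 1), f (ξ k) * (γ (k : ℤ) + γ ((k : ℤ) - 1)) * x ^ k * (1 - x) ^ (n - k)) / Q x) :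
    ∀ s : ℕ, 1 ≤ s → ∀ x ∈ Set.Icc (0 : ℝ) 1,
      Q x * (R (fun t => t ^ s) x - x ^ s)
        = x * (1 - x) * ∑ l ∈ Finset.range (s - 1), x ^ l *
            ∑ k ∈ Finset.range n,
              γ (k : ℤ) * (ξ (k + 1) ^ (s - 1 - l) - ξ k ^ (s - 1 - l)) * x ^ k * (1 - x) ^ (n - 1 - k) := by
  intro s hs x hx
  obtain ⟨m, rfl⟩ : ∃ m, s = m + 1 := ⟨s - 1, by omega⟩
  have hγ : ∀ k < n, 0 < γ k := fun k hk => hpos k (by omega)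
  have hnode : ∀ k < n, ξ (k + 1) * (γ ((k : ℤ) + 1) + γ k) = γ k := by
    intro k hk
    have hnext : 0 ≤ γ ((k : ℤ) + 1) := by
      rcases (Nat.succ_le_of_lt hk).lt_or_eq with hlt | heq
      · exact_mod_cast (hγ (k + 1) hlt).le
      · rw [← htop, ← heq, Nat.cast_succ]
    have hξk := hξ (k + 1) (by omega) hk
    push_cast at hξk
    rw [hξk, add_sub_cancel_right, add_comm (γ _), div_mul_cancel₀ _ (by linarith [hγ k hk])]
  have hQx : Q x = bernsteinComb n (fun k => γ k) x := hQ x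
  have hQpos : 0 < Q x := hQx ▸ bernsteinComb_pos hn hγ hx
  rw [hR, mul_sub, mul_div_cancel₀ _ hQpos.ne', hQx, mul_comm (bernsteinComb _ _ _),
    Nat.add_sub_cancel]
  exact numerator_pow_succ_sub x hneg htop hξ0 hnode m
end

section
/- For all x ∈ [0,1], |R_n(e_2)(x) − x^2| ≤ Δ_n · x(1−x), where Δ_n = max_{0 ≤ k ≤ n−1} |x_{k+1} − x_k|. In particular R_n(e_2)(x) ≥ x^2. -/
/-!
The node relation `ξ (k+1) * (γ k + γ (k+1)) = γ k` turns the numerator of `R_n(e_2)` into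
`∑ γ k ξ (k+1) x^(k+1) (1-x)^(n-1-k)`. Subtracting `x^2 Q(x)` and
`x(1-x) ∑ γ k (ξ (k+1) - ξ k) x^k (1-x)^(n-1-k)` leaves a sum telescoping in `γ k * ξ k`,
because the same relation reads
`γ k * (1 - ξ (k+1)) = γ (k+1) * ξ (k+1)`; its end terms vanish as `ξ 0 = 0` and `γ n = 0`.
Since the gaps `ξ (k+1) - ξ k` lie in `[0, Δ]`, the remaining sum lies between `0` and `Δ Q(x)`.
-/

open Finset

section Identity

variable {R : Type*} [CommRing R]

theorem sum_sq_node_mul_weight_eq (n : ℕ) (γ : ℤ → R) (ξ : ℕ → R) (hξ0 : ξ 0 = 0)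
    (hnode : ∀ k < n, ξ (k + 1) * (γ k + γ ↑(k + 1)) = γ k) (x : R) :
    ∑ k ∈ range (n + 1), ξ k ^ 2 * (γ k + γ (k - 1)) * x ^ k * (1 - x) ^ (n - k) =
      ∑ k ∈ range n, ξ (k + 1) * γ k * x ^ (k + 1) * (1 - x) ^ (n - 1 - k) := by
  rw [sum_range_succ', hξ0, zero_pow two_ne_zero, zero_mul, zero_mul, zero_mul, add_zero]
  refine sum_congr rfl fun k hk => ?_
  have hk := mem_range.mp hk
  rw [show n - (k + 1) = n - 1 - k by omega, Nat.cast_succ, add_sub_cancel_right, add_comm (γ _),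
    ← Nat.cast_succ, sq, mul_assoc (ξ _), hnode k hk]

theorem sum_sq_node_mul_weight_sub_sq_mul (n : ℕ) (γ : ℤ → R) (ξ : ℕ → R) (hξ0 : ξ 0 = 0)
    (htop : γ n = 0) (hnode : ∀ k < n, ξ (k + 1) * (γ k + γ ↑(k + 1)) = γ k) (x : R) :
    ∑ k ∈ range (n + 1), ξ k ^ 2 * (γ k + γ (k - 1)) * x ^ k * (1 - x) ^ (n - k) -
        x ^ 2 * ∑ k ∈ range n, γ k * x ^ k * (1 - x) ^ (n - 1 - k) =
      x * (1 - x) * ∑ k ∈ range n, (ξ (k + 1) - ξ k) * (γ k * x ^ k * (1 - x) ^ (n - 1 - k)) := by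
  set f : ℕ → R := fun k => γ k * ξ k * x ^ (k + 1) * (1 - x) ^ (n - k)
  have hterm : ∀ k < n,
      ξ (k + 1) * γ k * x ^ (k + 1) * (1 - x) ^ (n - 1 - k) -
          x ^ 2 * (γ k * x ^ k * (1 - x) ^ (n - 1 - k)) -
          x * (1 - x) * ((ξ (k + 1) - ξ k) * (γ k * x ^ k * (1 - x) ^ (n - 1 - k))) =
        f k - f (k + 1) := by
    intro k hk
    simp only [f]
    rw [show n - k = n - 1 - k + 1 by omega, show n - (k + 1) = n - 1 - k by omega]
    linear_combination (x ^ (k + 2) * (1 - x) ^ (n - 1 - k)) * hnode k hk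
  rw [sum_sq_node_mul_weight_eq n γ ξ hξ0 hnode, mul_sum, mul_sum, ← sub_eq_zero,
    ← sum_sub_distrib, ← sum_sub_distrib, sum_congr rfl fun k hk => hterm k (mem_range.mp hk),
    sum_range_sub']
  simp [f, hξ0, htop]

end Identity

section Order

variable {𝕜 : Type*} [Field 𝕜] [LinearOrder 𝕜] [IsStrictOrderedRing 𝕜]

theorem sum_mul_pow_mul_one_sub_pow_pos {n : ℕ} (hn : 1 ≤ n) {a : ℕ → 𝕜} (ha : ∀ k < n, 0 < a k)
    {x : 𝕜} (hx : x ∈ Set.Icc 0 1) : 0 < ∑ k ∈ range n, a k * x ^ k * (1 - x) ^ (n - 1 - k) := by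
  obtain ⟨hx0, hx1⟩ := hx
  have h1x : 0 ≤ 1 - x := sub_nonneg.mpr hx1
  refine sum_pos' (fun k hk => ?_) ?_
  · have := ha k (mem_range.mp hk)
    positivity
  rcases hx1.lt_or_eq with hx1 | rfl
  · have h1x : 0 < 1 - x := sub_pos.mpr hx1
    have := ha 0 (by omega)
    exact ⟨0, mem_range.mpr (by omega), by positivity⟩
  · refine ⟨n - 1, mem_range.mpr (by omega), ?_⟩
    simpa [show n - 1 - (n - 1) = 0 by omega] using ha (n - 1) (by omega)

theorem sum_mul_nonneg_and_le_mul_sum {ι : Type*} (s : Finset ι) {d q : ι → 𝕜} {Δ : 𝕜}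
    (hd : ∀ i ∈ s, 0 ≤ d i ∧ d i ≤ Δ) (hq : ∀ i ∈ s, 0 ≤ q i) :
    0 ≤ ∑ i ∈ s, d i * q i ∧ ∑ i ∈ s, d i * q i ≤ Δ * ∑ i ∈ s, q i := by
  refine ⟨sum_nonneg fun i hi => mul_nonneg (hd i hi).1 (hq i hi), ?_⟩
  rw [mul_sum]
  exact sum_le_sum fun i hi => mul_le_mul_of_nonneg_right (hd i hi).2 (hq i hi)

theorem abs_div_sub_le_and_le_div {N Q D t y Δ : 𝕜} (hQ : 0 < Q) (ht : 0 ≤ t) (hD : 0 ≤ D)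
    (hDΔ : D ≤ Δ * Q) (h : N - y * Q = t * D) : |N / Q - y| ≤ Δ * t ∧ y ≤ N / Q := by
  have hdiff : N / Q - y = t * D / Q := by
    rw [← h]
    field_simp
  have hnonneg : 0 ≤ t * D / Q := by positivity
  refine ⟨?_, by linarith⟩
  rw [hdiff, abs_of_nonneg hnonneg, div_le_iff₀ hQ]
  calc t * D ≤ t * (Δ * Q) := mul_le_mul_of_nonneg_left hDΔ ht
    _ = Δ * t * Q := by ring

end Order

theorem stmt7_general (n : ℕ) (hn : 1 ≤ n) (γ : ℤ → ℝ)
    (htop : γ (n : ℤ) = 0)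
    (hpos : ∀ k : ℕ, k ≤ n - 1 → 0 < γ (k : ℤ))
    (ξ : ℕ → ℝ) (hξ0 : ξ 0 = 0)
    (hξ : ∀ k : ℕ, 1 ≤ k → k ≤ n → ξ k = γ ((k : ℤ) - 1) / (γ ((k : ℤ) - 1) + γ (k : ℤ)))
    (hmono : ∀ k : ℕ, k < n → ξ k < ξ (k + 1))
    (Q : ℝ → ℝ)
    (hQ : ∀ x : ℝ, Q x = ∑ k ∈ Finset.range n, γ (k : ℤ) * x ^ k * (1 - x) ^ (n - 1 - k))
    (R : (ℝ → ℝ) → ℝ → ℝ)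
    (hR : ∀ f : ℝ → ℝ, ∀ x : ℝ, R f x =
      (∑ k ∈ Finset.range (n + 1), f (ξ k) * (γ (k : ℤ) + γ ((k : ℤ) - 1)) * x ^ k * (1 - x) ^ (n - k)) / Q x)
    (Δ : ℝ) (hΔ : IsGreatest {d : ℝ | ∃ k < n, d = |ξ (k + 1) - ξ k|} Δ) :
    ∀ x ∈ Set.Icc (0 : ℝ) 1,
      |R (fun t => t ^ 2) x - x ^ 2| ≤ Δ * (x * (1 - x)) ∧ x ^ 2 ≤ R (fun t => t ^ 2) x := by
  have hγ : ∀ k < n, 0 < γ k := fun k hk => hpos k (by omega)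
  have hnode : ∀ k < n, ξ (k + 1) * (γ k + γ ↑(k + 1)) = γ k := by
    intro k hk
    have hγ' : 0 ≤ γ ↑(k + 1) := by
      rcases Nat.lt_or_ge (k + 1) n with h | h
      · exact (hγ _ h).le
      · rw [show k + 1 = n by omega, htop]
    have := hξ (k + 1) (by omega) (by omega)
    rw [Nat.cast_succ, add_sub_cancel_right, ← Nat.cast_succ] at this
    rw [this, div_mul_cancel₀ _ (add_pos_of_pos_of_nonneg (hγ k hk) hγ').ne']
  have hgap : ∀ k ∈ range n, 0 ≤ ξ (k + 1) - ξ k ∧ ξ (k + 1) - ξ k ≤ Δ := fun k hk => by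
    have hlt := hmono k (mem_range.mp hk)
    refine ⟨by linarith, ?_⟩
    simpa [abs_of_pos (sub_pos.mpr hlt)] using hΔ.2 ⟨k, mem_range.mp hk, rfl⟩
  rintro x ⟨hx0, hx1⟩
  have h1x : 0 ≤ 1 - x := by linarith
  obtain ⟨hD, hDΔ⟩ := sum_mul_nonneg_and_le_mul_sum (range n) hgap
    (q := fun k => γ k * x ^ k * (1 - x) ^ (n - 1 - k))
    fun k hk => by have := hγ k (mem_range.mp hk); positivity
  rw [hR, hQ]
  exact abs_div_sub_le_and_le_div (sum_mul_pow_mul_one_sub_pow_pos hn hγ ⟨hx0, hx1⟩)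
    (mul_nonneg hx0 h1x) hD hDΔ
    (sum_sq_node_mul_weight_sub_sq_mul n γ ξ hξ0 htop hnode x)

/-- For all `x ∈ [0,1]`, `|R_n (e_2) x - x^2| ≤ Δ_n * x * (1-x)`, where
`Δ_n = max_{0 ≤ k ≤ n-1} |ξ (k+1) - ξ k|`. In particular `R_n (e_2) x ≥ x^2`. -/
theorem stmt7 (n : ℕ) (hn : 1 ≤ n) (γ : ℤ → ℝ)
    (hneg : γ (-1) = 0) (htop : γ (n : ℤ) = 0)
    (hpos : ∀ k : ℕ, k ≤ n - 1 → 0 < γ (k : ℤ))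
    (ξ : ℕ → ℝ) (hξ0 : ξ 0 = 0)
    (hξ : ∀ k : ℕ, 1 ≤ k → k ≤ n → ξ k = γ ((k : ℤ) - 1) / (γ ((k : ℤ) - 1) + γ (k : ℤ)))
    (hmono : ∀ k : ℕ, k < n → ξ k < ξ (k + 1))
    (Q : ℝ → ℝ)
    (hQ : ∀ x : ℝ, Q x = ∑ k ∈ Finset.range n, γ (k : ℤ) * x ^ k * (1 - x) ^ (n - 1 - k))
    (R : (ℝ → ℝ) → ℝ → ℝ)
    (hR : ∀ f : ℝ → ℝ, ∀ x : ℝ, R f x =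
      (∑ k ∈ Finset.range (n + 1), f (ξ k) * (γ (k : ℤ) + γ ((k : ℤ) - 1)) * x ^ k * (1 - x) ^ (n - k)) / Q x)
    (Δ : ℝ) (hΔ : IsGreatest {d : ℝ | ∃ k < n, d = |ξ (k + 1) - ξ k|} Δ) :
    ∀ x ∈ Set.Icc (0 : ℝ) 1,
      |R (fun t => t ^ 2) x - x ^ 2| ≤ Δ * (x * (1 - x)) ∧ x ^ 2 ≤ R (fun t => t ^ 2) x :=
  stmt7_general n hn γ htop hpos ξ hξ0 hξ hmono Q hQ R hR Δ hΔ
end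

section
/- For every natural number s ≥ 2 and every x ∈ (0,1), x^s < R_n(e_s)(x). -/
/-!
Write `p_j = x^j (1-x)^(N-j)`, `T_m = ∑ γ_j ξ_{j+1}^m p_j` and `S_m = ∑ γ_j ξ_j^m p_j`.
Since `ξ_{j+1} (γ_j + γ_{j+1}) = γ_j`, we have `Q = T_0` and the numerator of `R_n(e_{m+1})` is
`x T_m`. The same relation, read as `γ_j (1 - ξ_{j+1}) = γ_{j+1} ξ_{j+1}`, together with
`x p_j = (1-x) p_{j+1}`, gives `x (T_m - T_{m+1}) = (1-x) S_{m+1}`, and `S_{m+1} < T_{m+1}` because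
the nodes increase. Hence `x T_m < T_{m+1}`, so `x^(m+1) T_0 < T_{m+1}` and
`x^(m+2) Q < x T_{m+1}`.
-/

namespace RationalBernstein

open Finset

variable (N : ℕ) (γ : ℤ → ℝ) (x : ℝ)

noncomputable def momentSum (η : ℕ → ℝ) (m : ℕ) : ℝ :=
  ∑ j ∈ range (N + 1), γ j * η j ^ m * (x ^ j * (1 - x) ^ (N - j))

variable {N γ x}

theorem momentSum_pos (hγ : ∀ j : ℕ, j ≤ N → 0 < γ j) (hx : x ∈ Set.Ioo 0 1) (η : ℕ → ℝ) :
    0 < momentSum N γ x η 0 := by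
  obtain ⟨hx0, hx1⟩ := hx
  refine sum_pos (fun j hj => ?_) nonempty_range_add_one
  have := hγ j (Nat.lt_succ_iff.mp (mem_range.mp hj))
  have := sub_pos.mpr hx1
  positivity

theorem momentSum_lt_momentSum (hγ : ∀ j : ℕ, j ≤ N → 0 < γ j) (hx : x ∈ Set.Ioo 0 1)
    {η η' : ℕ → ℝ} (hη : ∀ j, j ≤ N → 0 ≤ η j) (hlt : ∀ j, j ≤ N → η j < η' j) (m : ℕ) :
    momentSum N γ x η (m + 1) < momentSum N γ x η' (m + 1) := by
  obtain ⟨hx0, hx1⟩ := hx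
  refine sum_lt_sum_of_nonempty nonempty_range_add_one (fun j hj => ?_)
  have hjN := Nat.lt_succ_iff.mp (mem_range.mp hj)
  have : 0 < 1 - x := sub_pos.mpr hx1
  have hc : 0 < γ j * (x ^ j * (1 - x) ^ (N - j)) := mul_pos (hγ j hjN) (by positivity)
  have hpow := pow_lt_pow_left₀ (hlt j hjN) (hη j hjN) (n := m + 1) (by omega)
  linear_combination mul_lt_mul_of_pos_left hpow hc

variable {ξ : ℕ → ℝ}

theorem x_mul_momentSum_sub_succ (hξ0 : ξ 0 = 0)
    (hξγ : ∀ j : ℕ, j ≤ N → ξ (j + 1) * (γ j + γ (j + 1)) = γ j) (htop : γ (N + 1) = 0)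
    (m : ℕ) :
    x * (momentSum N γ x (fun j => ξ (j + 1)) m - momentSum N γ x (fun j => ξ (j + 1)) (m + 1)) =
      (1 - x) * momentSum N γ x ξ (m + 1) := by
  calc _ = ∑ j ∈ range (N + 1),
          γ (j + 1) * ξ (j + 1) ^ (m + 1) * (x ^ (j + 1) * (1 - x) ^ (N - j)) := by
        simp only [momentSum, ← sum_sub_distrib, mul_sum]
        refine sum_congr rfl fun j hj => ?_
        linear_combination (-(ξ (j + 1) ^ m * x ^ (j + 1) * (1 - x) ^ (N - j))) *
          hξγ j (Nat.lt_succ_iff.mp (mem_range.mp hj))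
    _ = ∑ j ∈ range N, γ (j + 1) * ξ (j + 1) ^ (m + 1) * (x ^ (j + 1) * (1 - x) ^ (N - j)) := by
        rw [sum_range_succ, htop, zero_mul, zero_mul, add_zero]
    _ = (1 - x) * ∑ j ∈ range N,
          γ (j + 1) * ξ (j + 1) ^ (m + 1) * (x ^ (j + 1) * (1 - x) ^ (N - (j + 1))) := by
        rw [mul_sum]
        refine sum_congr rfl fun j hj => ?_
        rw [show N - j = N - (j + 1) + 1 by have := mem_range.mp hj; omega]
        ring
    _ = (1 - x) * momentSum N γ x ξ (m + 1) := by
        rw [momentSum, sum_range_succ' _ N, hξ0]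
        push_cast
        ring

theorem nonneg_of_eq_zero_of_lt_succ (hξ0 : ξ 0 = 0) (hmono : ∀ j, j < N → ξ j < ξ (j + 1)) :
    ∀ j, j ≤ N → 0 ≤ ξ j
  | 0, _ => hξ0.ge
  | j + 1, hj => (nonneg_of_eq_zero_of_lt_succ hξ0 hmono j (by omega)).trans (hmono j hj).le

theorem x_mul_momentSum_lt_succ (hγ : ∀ j : ℕ, j ≤ N → 0 < γ j) (hx : x ∈ Set.Ioo 0 1)
    (hξ0 : ξ 0 = 0) (hmono : ∀ j, j < N + 1 → ξ j < ξ (j + 1))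
    (hξγ : ∀ j : ℕ, j ≤ N → ξ (j + 1) * (γ j + γ (j + 1)) = γ j) (htop : γ (N + 1) = 0)
    (m : ℕ) :
    x * momentSum N γ x (fun j => ξ (j + 1)) m < momentSum N γ x (fun j => ξ (j + 1)) (m + 1) := by
  have hS := momentSum_lt_momentSum hγ hx
    (fun j hj => nonneg_of_eq_zero_of_lt_succ hξ0 hmono j (by omega))
    (fun j hj => hmono j (by omega)) m
  have hid := x_mul_momentSum_sub_succ (x := x) hξ0 hξγ htop m
  linear_combination hid + mul_lt_mul_of_pos_left hS (sub_pos.mpr hx.2)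

theorem pow_mul_momentSum_lt (hγ : ∀ j : ℕ, j ≤ N → 0 < γ j) (hx : x ∈ Set.Ioo 0 1)
    (hξ0 : ξ 0 = 0) (hmono : ∀ j, j < N + 1 → ξ j < ξ (j + 1))
    (hξγ : ∀ j : ℕ, j ≤ N → ξ (j + 1) * (γ j + γ (j + 1)) = γ j) (htop : γ (N + 1) = 0) :
    ∀ m : ℕ, x ^ (m + 1) * momentSum N γ x (fun j => ξ (j + 1)) 0 <
      momentSum N γ x (fun j => ξ (j + 1)) (m + 1)
  | 0 => by simpa using x_mul_momentSum_lt_succ hγ hx hξ0 hmono hξγ htop 0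
  | m + 1 =>
    calc x ^ (m + 2) * momentSum N γ x (fun j => ξ (j + 1)) 0
        = x * (x ^ (m + 1) * momentSum N γ x (fun j => ξ (j + 1)) 0) := by ring
      _ < x * momentSum N γ x (fun j => ξ (j + 1)) (m + 1) :=
        mul_lt_mul_of_pos_left (pow_mul_momentSum_lt hγ hx hξ0 hmono hξγ htop m) hx.1
      _ < momentSum N γ x (fun j => ξ (j + 1)) (m + 2) :=
        x_mul_momentSum_lt_succ hγ hx hξ0 hmono hξγ htop (m + 1)

theorem sum_pow_succ_mul_eq_mul_momentSum (hξ0 : ξ 0 = 0)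
    (hξγ : ∀ j : ℕ, j ≤ N → ξ (j + 1) * (γ j + γ (j + 1)) = γ j) (m : ℕ) :
    ∑ k ∈ range (N + 2), ξ k ^ (m + 1) * (γ k + γ (k - 1)) * x ^ k * (1 - x) ^ (N + 1 - k) =
      x * momentSum N γ x (fun j => ξ (j + 1)) m := by
  rw [sum_range_succ', hξ0, momentSum, mul_sum]
  simp only [ne_eq, Nat.add_one_ne_zero, not_false_eq_true, zero_pow, zero_mul, add_zero]
  refine sum_congr rfl fun j hj => ?_
  rw [show N + 1 - (j + 1) = N - j by omega]
  push_cast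
  rw [add_sub_cancel_right]
  linear_combination (ξ (j + 1) ^ m * x ^ (j + 1) * (1 - x) ^ (N - j)) *
    hξγ j (Nat.lt_succ_iff.mp (mem_range.mp hj))

end RationalBernstein

open RationalBernstein in
theorem stmt8_general (n : ℕ) (hn : 1 ≤ n) (γ : ℤ → ℝ)
    (htop : γ (n : ℤ) = 0)
    (hpos : ∀ k : ℕ, k ≤ n - 1 → 0 < γ (k : ℤ))
    (ξ : ℕ → ℝ) (hξ0 : ξ 0 = 0)
    (hξ : ∀ k : ℕ, 1 ≤ k → k ≤ n → ξ k = γ ((k : ℤ) - 1) / (γ ((k : ℤ) - 1) + γ (k : ℤ)))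
    (hmono : ∀ k : ℕ, k < n → ξ k < ξ (k + 1))
    (Q : ℝ → ℝ)
    (hQ : ∀ x : ℝ, Q x = ∑ k ∈ Finset.range n, γ (k : ℤ) * x ^ k * (1 - x) ^ (n - 1 - k))
    (R : (ℝ → ℝ) → ℝ → ℝ)
    (hR : ∀ f : ℝ → ℝ, ∀ x : ℝ, R f x =
      (∑ k ∈ Finset.range (n + 1), f (ξ k) * (γ (k : ℤ) + γ ((k : ℤ) - 1)) * x ^ k * (1 - x) ^ (n - k)) / Q x) :
    ∀ s : ℕ, 2 ≤ s → ∀ x ∈ Set.Ioo (0 : ℝ) 1, x ^ s < R (fun t => t ^ s) x := by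
  obtain ⟨N, rfl⟩ : ∃ N, n = N + 1 := ⟨n - 1, by omega⟩
  rintro s hs x hx
  obtain ⟨m, rfl⟩ : ∃ m, s = m + 2 := ⟨s - 2, by omega⟩
  push_cast at htop
  have hγ : ∀ j : ℕ, j ≤ N → 0 < γ j := fun j hj => hpos j (by omega)
  have hξγ : ∀ j : ℕ, j ≤ N → ξ (j + 1) * (γ j + γ (j + 1)) = γ j := by
    intro j hj
    have hsucc : 0 ≤ γ (j + 1) := by
      rcases hj.lt_or_eq with hj | rfl
      · exact_mod_cast (hγ (j + 1) hj).le
      · exact htop.ge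
    have := hξ (j + 1) (by omega) (by omega)
    push_cast at this
    rw [this, add_sub_cancel_right, div_mul_cancel₀ _ (by linarith [hγ j hj])]
  have hQx : Q x = momentSum N γ x (fun j => ξ (j + 1)) 0 := by
    simp only [hQ, momentSum, pow_zero, mul_one, Nat.add_sub_cancel, mul_assoc]
  rw [hR, sum_pow_succ_mul_eq_mul_momentSum hξ0 hξγ, hQx, lt_div_iff₀ (momentSum_pos hγ hx _),
    pow_succ', mul_assoc]
  exact mul_lt_mul_of_pos_left (pow_mul_momentSum_lt hγ hx hξ0 hmono hξγ htop m) hx.1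

/-- For every natural number `s ≥ 2` and every `x ∈ (0,1)`,
`x^s < R_n (e_s) x`. -/
theorem stmt8 (n : ℕ) (hn : 1 ≤ n) (γ : ℤ → ℝ)
    (hneg : γ (-1) = 0) (htop : γ (n : ℤ) = 0)
    (hpos : ∀ k : ℕ, k ≤ n - 1 → 0 < γ (k : ℤ))
    (ξ : ℕ → ℝ) (hξ0 : ξ 0 = 0)
    (hξ : ∀ k : ℕ, 1 ≤ k → k ≤ n → ξ k = γ ((k : ℤ) - 1) / (γ ((k : ℤ) - 1) + γ (k : ℤ)))
    (hmono : ∀ k : ℕ, k < n → ξ k < ξ (k + 1))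
    (Q : ℝ → ℝ)
    (hQ : ∀ x : ℝ, Q x = ∑ k ∈ Finset.range n, γ (k : ℤ) * x ^ k * (1 - x) ^ (n - 1 - k))
    (R : (ℝ → ℝ) → ℝ → ℝ)
    (hR : ∀ f : ℝ → ℝ, ∀ x : ℝ, R f x =
      (∑ k ∈ Finset.range (n + 1), f (ξ k) * (γ (k : ℤ) + γ ((k : ℤ) - 1)) * x ^ k * (1 - x) ^ (n - k)) / Q x) :
    ∀ s : ℕ, 2 ≤ s → ∀ x ∈ Set.Ioo (0 : ℝ) 1, x ^ s < R (fun t => t ^ s) x :=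
  stmt8_general n hn γ htop hpos ξ hξ0 hξ hmono Q hQ R hR
end

section
/- For all x ∈ [0,1], 0 ≤ R_n(e_3)(x) − x^3 ≤ 3·(R_n(e_2)(x) − x^2). -/
/-!
Write `R_n f = N f / Q` and `b_k(x) = x^k (1-x)^(n-1-k)`. Since `γ (-1) = γ n = 0`, the
numerator splits edge by edge: `N f = ∑_{k<n} γ_k b_k ((1-x) f(ξ_k) + x f(ξ_{k+1}))`.
The nodes are balanced, `γ_k ξ_k = γ_{k-1} (1 - ξ_k)`, so if `D` is the divided difference
`t ↦ [t, x; f]`, the terms `γ_k ξ_k D(ξ_k)` telescope and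
`N f - f(x) Q = x(1-x) ∑_{k<n} γ_k (D(ξ_{k+1}) - D(ξ_k)) b_k`.
For `e_2` the bracket is `ξ_{k+1} - ξ_k ≥ 0`, for `e_3` it is
`(ξ_{k+1} - ξ_k)(ξ_k + ξ_{k+1} + x)`, and `0 ≤ ξ_k + ξ_{k+1} + x ≤ 3`.
-/

open Finset

namespace RationalBernstein

noncomputable def numerator (n : ℕ) (γ : ℤ → ℝ) (ξ : ℕ → ℝ) (f : ℝ → ℝ) (x : ℝ) : ℝ :=
  ∑ k ∈ range (n + 1), f (ξ k) * (γ k + γ (k - 1)) * x ^ k * (1 - x) ^ (n - k)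

noncomputable def denominator (n : ℕ) (γ : ℤ → ℝ) (x : ℝ) : ℝ :=
  ∑ k ∈ range n, γ k * x ^ k * (1 - x) ^ (n - 1 - k)

theorem sum_range_telescope_mul_pow (n : ℕ) (c : ℕ → ℝ) (x : ℝ) :
    ∑ k ∈ range n, x ^ k * (1 - x) ^ (n - 1 - k) * (x * c (k + 1) - (1 - x) * c k) =
      c n * x ^ n - c 0 * (1 - x) ^ n := by
  have hterm : ∀ k ∈ range n,
      x ^ k * (1 - x) ^ (n - 1 - k) * (x * c (k + 1) - (1 - x) * c k) =
        c (k + 1) * x ^ (k + 1) * (1 - x) ^ (n - (k + 1)) - c k * x ^ k * (1 - x) ^ (n - k) := by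
    intro k hk
    obtain ⟨m, rfl⟩ : ∃ m, n = k + 1 + m := ⟨n - (k + 1), by grind⟩
    rw [show k + 1 + m - 1 - k = m by omega, show k + 1 + m - (k + 1) = m by omega,
      show k + 1 + m - k = m + 1 by omega]
    ring
  rw [sum_congr rfl hterm, sum_range_sub (fun j ↦ c j * x ^ j * (1 - x) ^ (n - j))]
  simp

variable {n : ℕ} {γ : ℤ → ℝ} {ξ : ℕ → ℝ} {x : ℝ}

theorem numerator_eq_sum_edges (hneg : γ (-1) = 0) (htop : γ n = 0) (f : ℝ → ℝ) (x : ℝ) :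
    numerator n γ ξ f x = ∑ k ∈ range n,
      γ k * (x ^ k * (1 - x) ^ (n - 1 - k)) * ((1 - x) * f (ξ k) + x * f (ξ (k + 1))) := by
  have hcur : ∑ k ∈ range (n + 1), f (ξ k) * γ k * x ^ k * (1 - x) ^ (n - k) =
      ∑ k ∈ range n, f (ξ k) * γ k * x ^ k * (1 - x) ^ (n - k) := by
    simp [sum_range_succ, htop]
  have hprev : ∑ k ∈ range (n + 1), f (ξ k) * γ (k - 1) * x ^ k * (1 - x) ^ (n - k) =
      ∑ k ∈ range n, f (ξ (k + 1)) * γ k * x ^ (k + 1) * (1 - x) ^ (n - (k + 1)) := by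
    simp [sum_range_succ', hneg]
  have hsplit : numerator n γ ξ f x =
      ∑ k ∈ range (n + 1), f (ξ k) * γ k * x ^ k * (1 - x) ^ (n - k) +
        ∑ k ∈ range (n + 1), f (ξ k) * γ (k - 1) * x ^ k * (1 - x) ^ (n - k) := by
    rw [numerator, ← sum_add_distrib]
    exact sum_congr rfl fun k _ ↦ by ring
  rw [hsplit, hcur, hprev, ← sum_add_distrib]
  refine sum_congr rfl fun k hk ↦ ?_
  rw [show n - k = n - 1 - k + 1 by grind, show n - (k + 1) = n - 1 - k by omega]
  ring

theorem numerator_sub_mul_denominator (hneg : γ (-1) = 0) (htop : γ n = 0)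
    (hbal : ∀ k ≤ n, γ k * ξ k = γ (k - 1) * (1 - ξ k)) (f D : ℝ → ℝ)
    (hD : ∀ k ≤ n, (ξ k - x) * D (ξ k) = f (ξ k) - f x) :
    numerator n γ ξ f x - denominator n γ x * f x = x * (1 - x) *
      ∑ k ∈ range n, γ k * (D (ξ (k + 1)) - D (ξ k)) * (x ^ k * (1 - x) ^ (n - 1 - k)) := by
  set c : ℕ → ℝ := fun j ↦ -(γ j * ξ j * D (ξ j))
  have hc0 : c 0 = 0 := by simp only [c]; rw [hbal 0 (Nat.zero_le n)]; simp [hneg]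
  have hcn : c n = 0 := by simp [c, htop]
  rw [numerator_eq_sum_edges hneg htop, denominator, sum_mul, mul_sum, ← sum_sub_distrib]
  calc _ = ∑ k ∈ range n, (x * (1 - x) * (γ k * (D (ξ (k + 1)) - D (ξ k)) *
          (x ^ k * (1 - x) ^ (n - 1 - k))) +
          x ^ k * (1 - x) ^ (n - 1 - k) * (x * c (k + 1) - (1 - x) * c k)) := by
        refine sum_congr rfl fun k hk ↦ ?_
        have hk : k < n := mem_range.1 hk
        have hbal' := hbal (k + 1) hk
        push_cast at hbal'
        rw [add_sub_cancel_right] at hbal'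
        simp only [c]
        push_cast
        linear_combination (-(γ k * (x ^ k * (1 - x) ^ (n - 1 - k)) * (1 - x))) * hD k hk.le
          - γ k * (x ^ k * (1 - x) ^ (n - 1 - k)) * x * hD (k + 1) hk
          + x ^ k * (1 - x) ^ (n - 1 - k) * x * D (ξ (k + 1)) * hbal'
    _ = _ := by rw [sum_add_distrib, sum_range_telescope_mul_pow, hc0, hcn]; simp

theorem denominator_pos (hn : 1 ≤ n) (hγ : ∀ k < n, 0 < γ k) (hx : x ∈ Set.Icc 0 1) :
    0 < denominator n γ x := by
  obtain ⟨hx0, hx1⟩ := hx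
  have hnonneg : ∀ k ∈ range n, 0 ≤ γ k * x ^ k * (1 - x) ^ (n - 1 - k) := fun k hk ↦
    mul_nonneg (mul_nonneg (hγ k (mem_range.1 hk)).le (pow_nonneg hx0 _))
      (pow_nonneg (sub_nonneg.2 hx1) _)
  rcases hx1.lt_or_eq with hx1 | rfl
  · refine sum_pos' hnonneg ⟨0, mem_range.2 hn, ?_⟩
    have := hγ 0 hn
    have : 0 < 1 - x := by linarith
    simp only [CharP.cast_eq_zero, pow_zero, mul_one]
    positivity
  · refine sum_pos' hnonneg ⟨n - 1, mem_range.2 (by omega), ?_⟩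
    simpa using hγ (n - 1) (by omega)

theorem mem_Icc_of_le_succ (hξ0 : ξ 0 = 0) (hξn : ξ n = 1)
    (hmono : ∀ k < n, ξ k ≤ ξ (k + 1)) : ∀ k ≤ n, ξ k ∈ Set.Icc 0 1 := by
  have hmon : MonotoneOn ξ (Set.Iic n) :=
    monotoneOn_of_le_add_one Set.ordConnected_Iic fun k _ _ hk1 ↦ hmono k hk1
  intro k hk
  exact ⟨hξ0 ▸ hmon (Nat.zero_le n) hk (Nat.zero_le k),
    hξn ▸ hmon hk (Set.mem_Iic.2 le_rfl) hk⟩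

theorem balance_of_eq_div (hneg : γ (-1) = 0) (htop : γ n = 0)
    (hpos : ∀ k : ℕ, k ≤ n - 1 → 0 < γ k) (hξ0 : ξ 0 = 0)
    (hξ : ∀ k : ℕ, 1 ≤ k → k ≤ n →
      ξ k = γ ((k : ℤ) - 1) / (γ ((k : ℤ) - 1) + γ k)) :
    ∀ k ≤ n, γ k * ξ k = γ (k - 1) * (1 - ξ k) := by
  rintro (_ | k) hk
  · simp [hξ0, hneg]
  have hprev : ((k + 1 : ℕ) : ℤ) - 1 = k := by push_cast; ring
  have hden : 0 < γ k + γ (k + 1 : ℕ) := by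
    refine add_pos_of_pos_of_nonneg (hpos k (by omega)) ?_
    rcases hk.lt_or_eq with hk | rfl
    exacts [(hpos (k + 1) (by omega)).le, htop.ge]
  rw [hξ (k + 1) (by omega) hk, hprev]
  field_simp
  ring

theorem cube_divided_difference_bounds {g w a b x : ℝ} (hg : 0 ≤ g) (hw : 0 ≤ w)
    (ha : 0 ≤ a) (hab : a ≤ b) (hb : b ≤ 1) (hx : x ∈ Set.Icc 0 1) :
    0 ≤ g * ((b ^ 2 + b * x + x ^ 2) - (a ^ 2 + a * x + x ^ 2)) * w ∧
      g * ((b ^ 2 + b * x + x ^ 2) - (a ^ 2 + a * x + x ^ 2)) * w ≤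
        3 * (g * ((b + x) - (a + x)) * w) := by
  have hinc : 0 ≤ g * (b - a) * w := by have := sub_nonneg.2 hab; positivity
  rw [show b ^ 2 + b * x + x ^ 2 - (a ^ 2 + a * x + x ^ 2) = (b - a) * (a + b + x) by ring,
    add_sub_add_right_eq_sub]
  constructor <;> nlinarith [hx.1, hx.2]

theorem cubic_error_sum_bounds (hγ : ∀ k < n, 0 ≤ γ k)
    (hξ : ∀ k ≤ n, ξ k ∈ Set.Icc 0 1) (hmono : ∀ k < n, ξ k ≤ ξ (k + 1)) (hx : x ∈ Set.Icc 0 1) :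
    0 ≤ ∑ k ∈ range n, γ k * ((ξ (k + 1) ^ 2 + ξ (k + 1) * x + x ^ 2) -
        (ξ k ^ 2 + ξ k * x + x ^ 2)) * (x ^ k * (1 - x) ^ (n - 1 - k)) ∧
      ∑ k ∈ range n, γ k * ((ξ (k + 1) ^ 2 + ξ (k + 1) * x + x ^ 2) -
          (ξ k ^ 2 + ξ k * x + x ^ 2)) * (x ^ k * (1 - x) ^ (n - 1 - k)) ≤
        3 * ∑ k ∈ range n,
          γ k * ((ξ (k + 1) + x) - (ξ k + x)) * (x ^ k * (1 - x) ^ (n - 1 - k)) := by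
  have hterm k (hk : k ∈ range n) := by
    have hk : k < n := mem_range.1 hk
    exact cube_divided_difference_bounds (hγ k hk)
      (mul_nonneg (pow_nonneg hx.1 k) (pow_nonneg (sub_nonneg.2 hx.2) (n - 1 - k)))
      (hξ k hk.le).1 (hmono k hk) (hξ (k + 1) hk).2 hx
  exact ⟨sum_nonneg fun k hk ↦ (hterm k hk).1,
    (sum_le_sum fun k hk ↦ (hterm k hk).2).trans_eq (mul_sum _ _ _).symm⟩

end RationalBernstein

/-- For all `x ∈ [0,1]`,
`0 ≤ R_n (e_3) x - x^3 ≤ 3 * (R_n (e_2) x - x^2)`. -/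
theorem stmt9 (n : ℕ) (hn : 1 ≤ n) (γ : ℤ → ℝ)
    (hneg : γ (-1) = 0) (htop : γ (n : ℤ) = 0)
    (hpos : ∀ k : ℕ, k ≤ n - 1 → 0 < γ (k : ℤ))
    (ξ : ℕ → ℝ) (hξ0 : ξ 0 = 0)
    (hξ : ∀ k : ℕ, 1 ≤ k → k ≤ n → ξ k = γ ((k : ℤ) - 1) / (γ ((k : ℤ) - 1) + γ (k : ℤ)))
    (hmono : ∀ k : ℕ, k < n → ξ k ≤ ξ (k + 1))
    (Q : ℝ → ℝ)
    (hQ : ∀ x : ℝ, Q x = ∑ k ∈ Finset.range n, γ (k : ℤ) * x ^ k * (1 - x) ^ (n - 1 - k))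
    (R : (ℝ → ℝ) → ℝ → ℝ)
    (hR : ∀ f : ℝ → ℝ, ∀ x : ℝ, R f x =
      (∑ k ∈ Finset.range (n + 1), f (ξ k) * (γ (k : ℤ) + γ ((k : ℤ) - 1)) * x ^ k * (1 - x) ^ (n - k)) / Q x) :
    ∀ x ∈ Set.Icc (0 : ℝ) 1,
      0 ≤ R (fun t => t ^ 3) x - x ^ 3 ∧
        R (fun t => t ^ 3) x - x ^ 3 ≤ 3 * (R (fun t => t ^ 2) x - x ^ 2) := by
  intro x hx
  have hγ : ∀ k < n, 0 < γ k := fun k hk ↦ hpos k (by omega)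
  have hbal := RationalBernstein.balance_of_eq_div hneg htop hpos hξ0 hξ
  have hξn : ξ n = 1 := by
    have := hbal n le_rfl
    rw [htop, zero_mul, ← Nat.cast_pred hn] at this
    nlinarith [hγ (n - 1) (by omega)]
  have hQx : Q x = RationalBernstein.denominator n γ x := hQ x
  have hQpos : 0 < Q x := hQx ▸ RationalBernstein.denominator_pos hn hγ hx
  have hR_sub : ∀ f, R f x - f x = (RationalBernstein.numerator n γ ξ f x -
      RationalBernstein.denominator n γ x * f x) / Q x :=
    fun f ↦ by rw [hR, div_sub' hQpos.ne', hQx]; rfl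
  obtain ⟨hS3_nonneg, hS3_le⟩ := RationalBernstein.cubic_error_sum_bounds
    (fun k hk ↦ (hγ k hk).le) (RationalBernstein.mem_Icc_of_le_succ hξ0 hξn hmono) hmono hx
  have hxx : 0 ≤ x * (1 - x) := mul_nonneg hx.1 (sub_nonneg.2 hx.2)
  rw [hR_sub, hR_sub, RationalBernstein.numerator_sub_mul_denominator hneg htop hbal _
      (fun t ↦ t ^ 2 + t * x + x ^ 2) (fun _ _ ↦ by ring),
    RationalBernstein.numerator_sub_mul_denominator hneg htop hbal _ (fun t ↦ t + x)
      (fun _ _ ↦ by ring)]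
  exact ⟨div_nonneg (mul_nonneg hxx hS3_nonneg) hQpos.le, by
    rw [mul_div_assoc']
    exact div_le_div_of_nonneg_right (by linarith [mul_le_mul_of_nonneg_left hS3_le hxx])
      hQpos.le⟩
end

section
/- The fourth central moment of the rational Bernstein operator satisfies, for all x ∈ [0,1]: R_n[(e_1−x)^4](x) ≤ Δ_n · R_n[(e_1−x)^2](x) · (6x^2 − 15x + 12 + Δ_n), where Δ_n = max_{0 ≤ k ≤ n−1}(x_{k+1} − x_k). -/
/-!
Put `c_k = γ_k + γ_{k-1}`, `w_k = c_k x^k (1-x)^(n-k)` and `g_k = ξ_k - x`. Since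
`ξ_{k+1} c_{k+1} = (1 - ξ_k) c_k = γ_k`, the weights `w_k` have vanishing first moment
`∑ w_k g_k = 0` and decay away from `x`: `w_{k+1} ≤ (1 - g_k) w_k` when `g_k ≥ 0`, and
`w_k ≤ (1 + g_{k+1}) w_{k+1}` when `g_{k+1} ≤ 0`. Summation by parts gives
`∑ w_k g_k^4 = ∑_j P_j (g_{j+1}^3 - g_j^3)` and `∑ w_k g_k^2 = ∑_j P_j (g_{j+1} - g_j)` with the
nonnegative tails `P_j = ∑_{k>j} w_k g_k`. The decay bounds `P_j` by the weight next to `x`, so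
every step away from `x` costs at most `3Δ` times one term of the second moment, while the step
across `x` costs `Δ²` times its own contribution to the second moment. Hence
`∑ w_k g_k^4 ≤ (3Δ + Δ²) ∑ w_k g_k^2`, and `3Δ + Δ² ≤ Δ (6x² - 15x + 12 + Δ)` on `[0, 1]`.
-/

open Finset

theorem sum_range_by_parts_of_sum_eq_zero {R : Type*} [CommRing R] (a h : ℕ → R) {N : ℕ}
    (ha : ∑ k ∈ range (N + 1), a k = 0) :
    ∑ k ∈ range (N + 1), a k * h k =
      ∑ j ∈ range N, (-∑ k ∈ range (j + 1), a k) * (h (j + 1) - h j) := by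
  have := sum_range_by_parts h a (N + 1)
  simp only [smul_eq_mul, add_tsub_cancel_right, ha, mul_zero, zero_sub] at this
  simp only [mul_comm (a _)]
  rw [this, ← sum_neg_distrib]
  exact sum_congr rfl fun _ _ => by ring

section DecayingWeights

variable {𝕜 : Type*} [Field 𝕜] [LinearOrder 𝕜] [IsStrictOrderedRing 𝕜]

theorem pow_three_sub_pow_three_le_of_nonneg {a b Δ : 𝕜} (ha : 0 ≤ a) (hab : a ≤ b)
    (hΔ : b - a ≤ Δ) : b ^ 3 - a ^ 3 ≤ 3 * Δ * b ^ 2 := by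
  nlinarith [mul_nonneg (sub_nonneg.2 hΔ) (sq_nonneg b),
    mul_nonneg (mul_nonneg (sub_nonneg.2 hab) (sub_nonneg.2 hab))
      (by linarith : (0 : 𝕜) ≤ 2 * b + a)]

theorem pow_three_sub_pow_three_le_of_nonpos {a b Δ : 𝕜} (hb : b ≤ 0) (hab : a ≤ b)
    (hΔ : b - a ≤ Δ) : b ^ 3 - a ^ 3 ≤ 3 * Δ * a ^ 2 := by
  have := pow_three_sub_pow_three_le_of_nonneg (neg_nonneg.2 hb) (neg_le_neg hab)
    (by linarith : -a - -b ≤ Δ)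
  ring_nf at this ⊢
  linarith

theorem pow_three_sub_pow_three_le_of_nonpos_of_nonneg {a b Δ : 𝕜} (ha : a ≤ 0) (hb : 0 ≤ b)
    (hΔ : b - a ≤ Δ) : b ^ 3 - a ^ 3 ≤ Δ ^ 2 * (b - a) := by
  have hsq : (b - a) ^ 2 ≤ Δ ^ 2 := pow_le_pow_left₀ (by linarith) hΔ 2
  nlinarith [mul_le_mul_of_nonneg_left hsq (by linarith : (0 : 𝕜) ≤ b - a),
    mul_nonneg (by linarith : (0 : 𝕜) ≤ b - a) (mul_nonneg (neg_nonneg.2 ha) hb)]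

theorem mul_pow_three_sub_pow_three_le {P a b w w' Δ : 𝕜} (hP : 0 ≤ P) (hab : a ≤ b)
    (hΔ : b - a ≤ Δ) (hright : 0 ≤ a → P ≤ w') (hleft : b ≤ 0 → P ≤ w) :
    P * (b ^ 3 - a ^ 3) ≤
      3 * Δ * (if 0 ≤ a then w' * b ^ 2 else if b ≤ 0 then w * a ^ 2 else 0) +
        Δ ^ 2 * (P * (b - a)) := by
  have hΔ0 : 0 ≤ Δ := by linarith
  have hrest : 0 ≤ Δ ^ 2 * (P * (b - a)) := by
    have := sub_nonneg.2 hab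
    positivity
  split_ifs with ha hb
  · calc P * (b ^ 3 - a ^ 3) ≤ P * (3 * Δ * b ^ 2) :=
          mul_le_mul_of_nonneg_left (pow_three_sub_pow_three_le_of_nonneg ha hab hΔ) hP
      _ ≤ w' * (3 * Δ * b ^ 2) := mul_le_mul_of_nonneg_right (hright ha) (by positivity)
      _ ≤ _ := by linarith
  · calc P * (b ^ 3 - a ^ 3) ≤ P * (3 * Δ * a ^ 2) :=
          mul_le_mul_of_nonneg_left (pow_three_sub_pow_three_le_of_nonpos hb hab hΔ) hP
      _ ≤ w * (3 * Δ * a ^ 2) := mul_le_mul_of_nonneg_right (hleft hb) (by positivity)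
      _ ≤ _ := by linarith
  · calc P * (b ^ 3 - a ^ 3) ≤ P * (Δ ^ 2 * (b - a)) := mul_le_mul_of_nonneg_left
          (pow_three_sub_pow_three_le_of_nonpos_of_nonneg (not_le.1 ha).le (not_le.1 hb).le hΔ) hP
      _ = _ := by ring

variable {w g : ℕ → 𝕜} {N : ℕ}

-- Every index `k` is charged by at most one step `j`: by `j = k - 1` if `0 ≤ g (k - 1)`, and by
-- `j = k` if `g k < 0`.
theorem sum_ite_le_sum_mul_sq (hw : ∀ k ≤ N, 0 ≤ w k) (hg : MonotoneOn g (Set.Iic N)) :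
    ∑ j ∈ range N,
        (if 0 ≤ g j then w (j + 1) * g (j + 1) ^ 2 else if g (j + 1) ≤ 0 then w j * g j ^ 2 else 0)
      ≤ ∑ k ∈ range (N + 1), w k * g k ^ 2 := by
  set pos : ℕ → 𝕜 := fun k => if 0 ≤ g k then w k * g k ^ 2 else 0
  set neg : ℕ → 𝕜 := fun k => if g k < 0 then w k * g k ^ 2 else 0
  have hpos : ∀ k ≤ N, 0 ≤ pos k := fun k hk => by
    have := hw k hk
    simp only [pos]; split_ifs <;> positivity
  have hneg : ∀ k ≤ N, 0 ≤ neg k := fun k hk => by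
    have := hw k hk
    simp only [neg]; split_ifs <;> positivity
  calc _ ≤ ∑ j ∈ range N, (pos (j + 1) + neg j) := by
        refine sum_le_sum fun j hj => ?_
        have hj : j < N := mem_range.1 hj
        have hgj : g j ≤ g (j + 1) :=
          hg (Set.mem_Iic.2 (by omega)) (Set.mem_Iic.2 (by omega)) (by omega)
        have h1 := hpos (j + 1) (by omega)
        have h2 := hneg j (by omega)
        simp only [pos, neg] at h1 h2 ⊢
        split_ifs at h1 h2 ⊢ <;> linarith
    _ ≤ ∑ k ∈ range (N + 1), pos k + ∑ k ∈ range (N + 1), neg k := by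
        rw [sum_add_distrib, sum_range_succ' pos, sum_range_succ neg]
        linarith [hpos 0 (Nat.zero_le N), hneg N le_rfl]
    _ = _ := by
        rw [← sum_add_distrib]
        refine sum_congr rfl fun k _ => ?_
        simp only [pos, neg]
        split_ifs <;> first | (exfalso; linarith) | ring

theorem sum_Ico_mul_le_of_decay (hw : ∀ k ≤ N, 0 ≤ w k) (hg : MonotoneOn g (Set.Iic N))
    (hgN : g N ≤ 1) (hdecay : ∀ k < N, 0 ≤ g k → w (k + 1) ≤ (1 - g k) * w k)
    {j : ℕ} (hj : j ≤ N) (hgj : 0 ≤ g j) :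
    ∑ k ∈ Ico j (N + 1), w k * g k ≤ w j := by
  induction hj using Nat.decreasingInduction with
  | self =>
    rw [Nat.Ico_succ_singleton, sum_singleton]
    nlinarith [hw N le_rfl]
  | of_succ j hjN ih =>
    have hgj1 : g j ≤ g (j + 1) :=
      hg (Set.mem_Iic.2 (by omega)) (Set.mem_Iic.2 (by omega)) (by omega)
    rw [sum_eq_sum_Ico_succ_bot (by omega)]
    linarith [ih (hgj.trans hgj1), hdecay j hjN hgj]

theorem neg_sum_range_mul_le_of_decay (hw : ∀ k ≤ N, 0 ≤ w k) (hg : MonotoneOn g (Set.Iic N))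
    (hg0 : -1 ≤ g 0) (hdecay : ∀ k < N, g (k + 1) ≤ 0 → w k ≤ (1 + g (k + 1)) * w (k + 1))
    {j : ℕ} (hj : j ≤ N) (hgj : g j ≤ 0) :
    -∑ k ∈ range (j + 1), w k * g k ≤ w j := by
  induction j with
  | zero =>
    rw [sum_range_one]
    nlinarith [hw 0 (Nat.zero_le N)]
  | succ j ih =>
    have hgj1 : g j ≤ g (j + 1) :=
      hg (Set.mem_Iic.2 (by omega)) (Set.mem_Iic.2 (by omega)) (by omega)
    rw [sum_range_succ]
    linarith [ih (by omega) (hgj1.trans hgj), hdecay j (by omega) hgj]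

theorem sum_mul_pow_four_le_of_decay {Δ : 𝕜} (hw : ∀ k ≤ N, 0 ≤ w k)
    (hg : MonotoneOn g (Set.Iic N)) (hgap : ∀ k < N, g (k + 1) - g k ≤ Δ) (hΔ : 0 ≤ Δ)
    (hg0 : -1 ≤ g 0) (hgN : g N ≤ 1) (hmean : ∑ k ∈ range (N + 1), w k * g k = 0)
    (hright : ∀ k < N, 0 ≤ g k → w (k + 1) ≤ (1 - g k) * w k)
    (hleft : ∀ k < N, g (k + 1) ≤ 0 → w k ≤ (1 + g (k + 1)) * w (k + 1)) :
    ∑ k ∈ range (N + 1), w k * g k ^ 4 ≤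
      (3 * Δ + Δ ^ 2) * ∑ k ∈ range (N + 1), w k * g k ^ 2 := by
  set P : ℕ → 𝕜 := fun j => -∑ k ∈ range (j + 1), w k * g k
  have hparts : ∀ h : ℕ → 𝕜,
      ∑ k ∈ range (N + 1), w k * g k * h k = ∑ j ∈ range N, P j * (h (j + 1) - h j) :=
    fun h => sum_range_by_parts_of_sum_eq_zero _ h hmean
  have hmono : ∀ {i j}, i ≤ j → j ≤ N → g i ≤ g j := fun hij hj =>
    hg (Set.mem_Iic.2 (hij.trans hj)) (Set.mem_Iic.2 hj) hij
  have hP_tail : ∀ j < N, P j = ∑ k ∈ Ico (j + 1) (N + 1), w k * g k := fun j hj => by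
    rw [← sum_range_add_sum_Ico _ (by omega : j + 1 ≤ N + 1)] at hmean
    linarith
  have hP_right : ∀ j < N, 0 ≤ g j → P j ≤ w (j + 1) := fun j hj hgj =>
    (hP_tail j hj).trans_le <|
      sum_Ico_mul_le_of_decay hw hg hgN hright hj (hgj.trans (hmono j.le_succ hj))
  have hP_left : ∀ j < N, g (j + 1) ≤ 0 → P j ≤ w j := fun j hj hgj =>
    neg_sum_range_mul_le_of_decay hw hg hg0 hleft hj.le ((hmono j.le_succ hj).trans hgj)
  have hP_nonneg : ∀ j < N, 0 ≤ P j := by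
    intro j hj
    rcases le_total 0 (g (j + 1)) with h | h
    · rw [hP_tail j hj]
      refine sum_nonneg fun k hk => ?_
      have hk := mem_Ico.1 hk
      exact mul_nonneg (hw k (by omega)) (h.trans (hmono hk.1 (by omega)))
    · refine neg_nonneg.2 (sum_nonpos fun k hk => ?_)
      have hk := mem_range.1 hk
      exact mul_nonpos_of_nonneg_of_nonpos (hw k (by omega)) ((hmono (by omega) hj).trans h)
  calc ∑ k ∈ range (N + 1), w k * g k ^ 4
      = ∑ j ∈ range N, P j * (g (j + 1) ^ 3 - g j ^ 3) :=
        (sum_congr rfl fun k _ => by ring).trans (hparts fun k => g k ^ 3)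
    _ ≤ 3 * Δ * ∑ j ∈ range N, (if 0 ≤ g j then w (j + 1) * g (j + 1) ^ 2
          else if g (j + 1) ≤ 0 then w j * g j ^ 2 else 0) +
          Δ ^ 2 * ∑ j ∈ range N, P j * (g (j + 1) - g j) := by
        rw [mul_sum, mul_sum, ← sum_add_distrib]
        refine sum_le_sum fun j hj => ?_
        have hj := mem_range.1 hj
        exact mul_pow_three_sub_pow_three_le (hP_nonneg j hj) (hmono j.le_succ hj) (hgap j hj)
          (hP_right j hj) (hP_left j hj)
    _ ≤ 3 * Δ * ∑ k ∈ range (N + 1), w k * g k ^ 2 +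
          Δ ^ 2 * ∑ k ∈ range (N + 1), w k * g k ^ 2 := by
        rw [← hparts g]
        simp only [mul_assoc, ← pow_two]
        gcongr
        exact sum_ite_le_sum_mul_sq hw hg
    _ = _ := by ring

theorem sum_bernstein_mul_sub_eq_zero {R : Type*} [CommRing R] {c ξ : ℕ → R} {N : ℕ} (x : R)
    (hξ0 : ξ 0 = 0) (hξN : ξ N = 1) (hrel : ∀ k < N, ξ (k + 1) * c (k + 1) = (1 - ξ k) * c k) :
    ∑ k ∈ range (N + 1), c k * x ^ k * (1 - x) ^ (N - k) * (ξ k - x) = 0 := by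
  set T := ∑ k ∈ range N, (1 - ξ k) * c k * (x ^ k * (1 - x) ^ (N - 1 - k))
  have hξc : ∑ k ∈ range (N + 1), ξ k * c k * (x ^ k * (1 - x) ^ (N - k)) = x * T := by
    rw [sum_range_succ', hξ0, zero_mul, zero_mul, add_zero, mul_sum]
    refine sum_congr rfl fun k hk => ?_
    rw [hrel k (mem_range.1 hk), pow_succ, show N - (k + 1) = N - 1 - k by omega]
    ring
  have hξc' : ∑ k ∈ range (N + 1), (1 - ξ k) * c k * (x ^ k * (1 - x) ^ (N - k)) = (1 - x) * T := by
    rw [sum_range_succ, hξN, sub_self, zero_mul, zero_mul, add_zero, mul_sum]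
    refine sum_congr rfl fun k hk => ?_
    rw [show N - k = N - 1 - k + 1 by have := mem_range.1 hk; omega, pow_succ]
    ring
  calc _ = (1 - x) * ∑ k ∈ range (N + 1), ξ k * c k * (x ^ k * (1 - x) ^ (N - k)) -
        x * ∑ k ∈ range (N + 1), (1 - ξ k) * c k * (x ^ k * (1 - x) ^ (N - k)) := by
        rw [mul_sum, mul_sum, ← sum_sub_distrib]
        exact sum_congr rfl fun k _ => by ring
    _ = 0 := by rw [hξc, hξc']; ring

section BernsteinWeights

variable {𝕜 : Type*} [Field 𝕜] [LinearOrder 𝕜] [IsStrictOrderedRing 𝕜]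
  {c ξ : ℕ → 𝕜} {N k : ℕ} {x : 𝕜}

theorem bernstein_weight_succ_le (hx : x ∈ Set.Icc 0 1) (hk : k < N)
    (hrel : ξ (k + 1) * c (k + 1) = (1 - ξ k) * c k) (hc : 0 ≤ c k) (hξ : 0 < ξ (k + 1))
    (hxξ : x ≤ ξ k) (hξξ : ξ k ≤ ξ (k + 1)) (hξ1 : ξ k ≤ 1) :
    c (k + 1) * x ^ (k + 1) * (1 - x) ^ (N - (k + 1)) ≤
      (1 - (ξ k - x)) * (c k * x ^ k * (1 - x) ^ (N - k)) := by
  obtain ⟨hx0, hx1⟩ := hx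
  have hcore : c (k + 1) * x ≤ (1 - (ξ k - x)) * (c k * (1 - x)) := by
    refine le_of_mul_le_mul_left ?_ hξ
    calc ξ (k + 1) * (c (k + 1) * x) = (1 - ξ k) * x * c k := by rw [← mul_assoc, hrel]; ring
      _ ≤ ξ k * ((1 - (ξ k - x)) * (1 - x)) * c k := by
        refine mul_le_mul_of_nonneg_right ?_ hc
        nlinarith [mul_nonneg (sub_nonneg.2 hxξ) (by nlinarith : (0 : 𝕜) ≤ 1 - ξ k + ξ k * x)]
      _ ≤ ξ (k + 1) * ((1 - (ξ k - x)) * (1 - x)) * c k := by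
        gcongr
        exact mul_nonneg (by linarith) (by linarith)
      _ = _ := by ring
  rw [show N - k = N - (k + 1) + 1 by omega, pow_succ, pow_succ]
  calc _ = c (k + 1) * x * (x ^ k * (1 - x) ^ (N - (k + 1))) := by ring
    _ ≤ (1 - (ξ k - x)) * (c k * (1 - x)) * (x ^ k * (1 - x) ^ (N - (k + 1))) :=
      mul_le_mul_of_nonneg_right hcore (mul_nonneg (pow_nonneg hx0 _) (pow_nonneg (by linarith) _))
    _ = _ := by ring

theorem bernstein_weight_le_succ (hx : x ∈ Set.Icc 0 1) (hk : k < N)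
    (hrel : ξ (k + 1) * c (k + 1) = (1 - ξ k) * c k) (hc : 0 ≤ c (k + 1)) (hξ : ξ k < 1)
    (hξx : ξ (k + 1) ≤ x) (hξξ : ξ k ≤ ξ (k + 1)) (hξ0 : 0 ≤ ξ (k + 1)) :
    c k * x ^ k * (1 - x) ^ (N - k) ≤
      (1 + (ξ (k + 1) - x)) * (c (k + 1) * x ^ (k + 1) * (1 - x) ^ (N - (k + 1))) := by
  obtain ⟨hx0, hx1⟩ := hx
  have hcore : c k * (1 - x) ≤ (1 + (ξ (k + 1) - x)) * (c (k + 1) * x) := by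
    refine le_of_mul_le_mul_left ?_ (sub_pos.2 hξ)
    calc (1 - ξ k) * (c k * (1 - x)) = ξ (k + 1) * (1 - x) * c (k + 1) := by
          rw [← mul_assoc, ← hrel]; ring
      _ ≤ (1 - ξ (k + 1)) * ((1 + (ξ (k + 1) - x)) * x) * c (k + 1) := by
        refine mul_le_mul_of_nonneg_right ?_ hc
        nlinarith [mul_nonneg (sub_nonneg.2 hξx)
          (by nlinarith : (0 : 𝕜) ≤ ξ (k + 1) + (1 - ξ (k + 1)) * (1 - x))]
      _ ≤ (1 - ξ k) * ((1 + (ξ (k + 1) - x)) * x) * c (k + 1) := by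
        gcongr
        exact mul_nonneg (by linarith) hx0
      _ = _ := by ring
  rw [show N - k = N - (k + 1) + 1 by omega, pow_succ, pow_succ]
  calc _ = c k * (1 - x) * (x ^ k * (1 - x) ^ (N - (k + 1))) := by ring
    _ ≤ (1 + (ξ (k + 1) - x)) * (c (k + 1) * x) * (x ^ k * (1 - x) ^ (N - (k + 1))) :=
      mul_le_mul_of_nonneg_right hcore (mul_nonneg (pow_nonneg hx0 _) (pow_nonneg (by linarith) _))
    _ = _ := by ring

theorem sum_bernstein_mul_pow_four_le {Δ : 𝕜} (hx : x ∈ Set.Icc 0 1) (hc : ∀ k ≤ N, 0 ≤ c k)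
    (hξ0 : ξ 0 = 0) (hξN : ξ N = 1) (hξ : MonotoneOn ξ (Set.Iic N))
    (hgap : ∀ k < N, ξ (k + 1) - ξ k ≤ Δ) (hΔ : 0 ≤ Δ)
    (hrel : ∀ k < N, ξ (k + 1) * c (k + 1) = (1 - ξ k) * c k)
    (hpos : ∀ k < N, 0 < (1 - ξ k) * c k) :
    ∑ k ∈ range (N + 1), (ξ k - x) ^ 4 * c k * x ^ k * (1 - x) ^ (N - k) ≤
      Δ * (∑ k ∈ range (N + 1), (ξ k - x) ^ 2 * c k * x ^ k * (1 - x) ^ (N - k)) *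
        (6 * x ^ 2 - 15 * x + 12 + Δ) := by
  obtain ⟨hx0, hx1⟩ := hx
  have hmem : ∀ {k}, k ≤ N → k ∈ Set.Iic N := Set.mem_Iic.2
  have hξ_nonneg : ∀ k ≤ N, 0 ≤ ξ k := fun k hk =>
    hξ0 ▸ hξ (hmem (Nat.zero_le N)) (hmem hk) (Nat.zero_le k)
  have hξ_le_one : ∀ k ≤ N, ξ k ≤ 1 := fun k hk => hξN ▸ hξ (hmem hk) (hmem le_rfl) hk
  have hξ_succ_pos : ∀ k < N, 0 < ξ (k + 1) := fun k hk =>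
    pos_of_mul_pos_left ((hrel k hk).symm ▸ hpos k hk) (hc (k + 1) hk)
  have hξ_lt_one : ∀ k < N, ξ k < 1 := fun k hk =>
    sub_pos.1 (pos_of_mul_pos_left (hpos k hk) (hc k hk.le))
  have hξ_succ : ∀ k < N, ξ k ≤ ξ (k + 1) := fun k hk => hξ (hmem hk.le) (hmem hk) k.le_succ
  have hw : ∀ k ≤ N, 0 ≤ c k * x ^ k * (1 - x) ^ (N - k) := fun k hk =>
    mul_nonneg (mul_nonneg (hc k hk) (pow_nonneg hx0 _)) (pow_nonneg (sub_nonneg.2 hx1) _)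
  have hmoment := sum_mul_pow_four_le_of_decay (w := fun k => c k * x ^ k * (1 - x) ^ (N - k))
    (g := fun k => ξ k - x) hw (fun i hi j hj hij => sub_le_sub_right (hξ hi hj hij) x)
    (fun k hk => by linarith [hgap k hk]) hΔ (by linarith [hξ0]) (by linarith [hξ_le_one N le_rfl])
    (sum_bernstein_mul_sub_eq_zero x hξ0 hξN hrel)
    (fun k hk _ => bernstein_weight_succ_le ⟨hx0, hx1⟩ hk (hrel k hk) (hc k hk.le)
      (hξ_succ_pos k hk) (by linarith) (hξ_succ k hk) (hξ_le_one k hk.le))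
    (fun k hk _ => bernstein_weight_le_succ ⟨hx0, hx1⟩ hk (hrel k hk) (hc (k + 1) hk)
      (hξ_lt_one k hk) (by linarith) (hξ_succ k hk) (hξ_nonneg (k + 1) hk))
  have hS2 : 0 ≤ ∑ k ∈ range (N + 1), c k * x ^ k * (1 - x) ^ (N - k) * (ξ k - x) ^ 2 :=
    sum_nonneg fun k hk => mul_nonneg (hw k (Nat.lt_succ_iff.1 (mem_range.1 hk))) (sq_nonneg _)
  have hcomm : ∀ p : ℕ, ∑ k ∈ range (N + 1), (ξ k - x) ^ p * c k * x ^ k * (1 - x) ^ (N - k) =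
      ∑ k ∈ range (N + 1), c k * x ^ k * (1 - x) ^ (N - k) * (ξ k - x) ^ p :=
    fun p => sum_congr rfl fun k _ => by ring
  rw [hcomm, hcomm]
  refine hmoment.trans ?_
  nlinarith [mul_nonneg (mul_nonneg hΔ hS2) (mul_nonneg (sub_nonneg.2 hx1)
    (by linarith : (0 : 𝕜) ≤ 3 - 2 * x))]

end BernsteinWeights

namespace RationalBernstein

variable {n : ℕ} {γ : ℤ → ℝ} {ξ : ℕ → ℝ}

theorem gamma_nonneg (htop : γ (n : ℤ) = 0) (hpos : ∀ k : ℕ, k ≤ n - 1 → 0 < γ (k : ℤ))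
    {k : ℕ} (hk : k ≤ n) : 0 ≤ γ (k : ℤ) := by
  rcases hk.lt_or_eq with h | rfl
  · exact (hpos k (by omega)).le
  · exact htop.ge

theorem coeff_nonneg (hneg : γ (-1) = 0) (htop : γ (n : ℤ) = 0)
    (hpos : ∀ k : ℕ, k ≤ n - 1 → 0 < γ (k : ℤ)) {k : ℕ} (hk : k ≤ n) :
    0 ≤ γ (k : ℤ) + γ ((k : ℤ) - 1) := by
  rcases k with _ | k
  · simpa [hneg] using gamma_nonneg htop hpos hk
  · simpa using add_nonneg (gamma_nonneg htop hpos hk) (gamma_nonneg htop hpos (k := k) (by omega))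

theorem node_mul_coeff (hneg : γ (-1) = 0) (htop : γ (n : ℤ) = 0)
    (hpos : ∀ k : ℕ, k ≤ n - 1 → 0 < γ (k : ℤ)) (hξ0 : ξ 0 = 0)
    (hξ : ∀ k : ℕ, 1 ≤ k → k ≤ n → ξ k = γ ((k : ℤ) - 1) / (γ ((k : ℤ) - 1) + γ (k : ℤ)))
    {k : ℕ} (hk : k ≤ n) : ξ k * (γ (k : ℤ) + γ ((k : ℤ) - 1)) = γ ((k : ℤ) - 1) := by
  rcases k with _ | k
  · simp [hξ0, hneg]
  · have hden : 0 < γ ((k + 1 : ℕ) : ℤ) + γ (((k + 1 : ℕ) : ℤ) - 1) := by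
      simpa using add_pos_of_nonneg_of_pos (gamma_nonneg htop hpos hk) (hpos k (by omega))
    rw [hξ (k + 1) (by omega) hk, add_comm (γ (_ - 1)), div_mul_cancel₀ _ hden.ne']

theorem one_sub_node_mul_coeff (hneg : γ (-1) = 0) (htop : γ (n : ℤ) = 0)
    (hpos : ∀ k : ℕ, k ≤ n - 1 → 0 < γ (k : ℤ)) (hξ0 : ξ 0 = 0)
    (hξ : ∀ k : ℕ, 1 ≤ k → k ≤ n → ξ k = γ ((k : ℤ) - 1) / (γ ((k : ℤ) - 1) + γ (k : ℤ)))
    {k : ℕ} (hk : k ≤ n) : (1 - ξ k) * (γ (k : ℤ) + γ ((k : ℤ) - 1)) = γ (k : ℤ) := by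
  rw [sub_mul, one_mul, node_mul_coeff hneg htop hpos hξ0 hξ hk]
  ring

end RationalBernstein

open RationalBernstein

/-- For all `x ∈ [0,1]`,
`R_n ((e_1 - x)^4) x ≤ Δ_n * R_n ((e_1 - x)^2) x * (6x^2 - 15x + 12 + Δ_n)`,
where `Δ_n = max_{0 ≤ k ≤ n-1} (ξ (k+1) - ξ k)`. -/
theorem stmt12 (n : ℕ) (hn : 1 ≤ n) (γ : ℤ → ℝ)
    (hneg : γ (-1) = 0) (htop : γ (n : ℤ) = 0)
    (hpos : ∀ k : ℕ, k ≤ n - 1 → 0 < γ (k : ℤ))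
    (ξ : ℕ → ℝ) (hξ0 : ξ 0 = 0)
    (hξ : ∀ k : ℕ, 1 ≤ k → k ≤ n → ξ k = γ ((k : ℤ) - 1) / (γ ((k : ℤ) - 1) + γ (k : ℤ)))
    (hmono : ∀ k : ℕ, k < n → ξ k ≤ ξ (k + 1))
    (Q : ℝ → ℝ)
    (hQ : ∀ x : ℝ, Q x = ∑ k ∈ Finset.range n, γ (k : ℤ) * x ^ k * (1 - x) ^ (n - 1 - k))
    (R : (ℝ → ℝ) → ℝ → ℝ)
    (hR : ∀ f : ℝ → ℝ, ∀ x : ℝ, R f x =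
      (∑ k ∈ Finset.range (n + 1), f (ξ k) * (γ (k : ℤ) + γ ((k : ℤ) - 1)) * x ^ k * (1 - x) ^ (n - k)) / Q x)
    (Δ : ℝ) (hΔ : IsGreatest {d : ℝ | ∃ k < n, d = ξ (k + 1) - ξ k} Δ) :
    ∀ x ∈ Set.Icc (0 : ℝ) 1,
      R (fun t => (t - x) ^ 4) x
        ≤ Δ * R (fun t => (t - x) ^ 2) x * (6 * x ^ 2 - 15 * x + 12 + Δ) := by
  intro x hx
  have hΔ0 : 0 ≤ Δ := by
    obtain ⟨k, hk, rfl⟩ := hΔ.1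
    exact sub_nonneg.2 (hmono k hk)
  have hξn : ξ n = 1 := by
    have hγ : 0 < γ ((n : ℤ) - 1) := by simpa [Nat.cast_sub hn] using hpos (n - 1) le_rfl
    rw [hξ n hn le_rfl, htop, add_zero, div_self hγ.ne']
  have hξmono : MonotoneOn ξ (Set.Iic n) :=
    monotoneOn_of_le_succ Set.ordConnected_Iic fun k _ _ hk =>
      hmono k (by simpa [Order.succ_eq_add_one, Nat.add_one_le_iff] using hk)
  have key := sum_bernstein_mul_pow_four_le (c := fun k : ℕ => γ k + γ (k - 1)) hx
    (fun k hk => coeff_nonneg hneg htop hpos hk) hξ0 hξn hξmono (fun k hk => hΔ.2 ⟨k, hk, rfl⟩)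
    hΔ0
    (fun k hk => by
      rw [node_mul_coeff hneg htop hpos hξ0 hξ hk,
        one_sub_node_mul_coeff hneg htop hpos hξ0 hξ hk.le]
      simp)
    (fun k hk => by
      rw [one_sub_node_mul_coeff hneg htop hpos hξ0 hξ hk.le]
      exact hpos k (by omega))
  have hQx : 0 ≤ Q x := by
    rw [hQ]
    exact sum_nonneg fun k hk => mul_nonneg (mul_nonneg (gamma_nonneg htop hpos
      (by simp at hk; omega)) (pow_nonneg hx.1 _)) (pow_nonneg (sub_nonneg.2 hx.2) _)
  simp only [hR]
  rw [mul_div_assoc', div_mul_eq_mul_div]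
  exact div_le_div_of_nonneg_right key hQx
end DecayingWeights
end

section
/- Let φ ∈ C[0,1] be strictly positive with minimum m, and define x_{n,k} = kφ((k−1)/(n−1)) / (kφ((k−1)/(n−1)) + (n−k)φ(k/(n−1))) for k = 1,...,n−1, x_{n,0}=0, x_{n,n}=1. Then for all k, |x_{n,k} − k/n| ≤ (1/(4m))·ω₁(φ, 1/(n−1)), where ω₁(φ,h) = sup{|φ(x)−φ(y)| : x,y ∈ [0,1], |x−y| ≤ h}. -/
/-! For `1 ≤ k ≤ n - 1` put `a = φ((k-1)/(n-1))` and `b = φ(k/(n-1))`. Then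
`ξ k - k/n = k(n-k)(a-b) / (n(ka + (n-k)b))`, the denominator is at least `n² m`
and `4k(n-k) ≤ n²`, so `|ξ k - k/n| ≤ |a - b|/(4m)`; the two nodes are `1/(n-1)` apart,
and `ω` is a genuine bound for `|a - b|` because `φ` is bounded on the compact `[0,1]`. -/

open Set

noncomputable def modulusOfContinuity (φ : ℝ → ℝ) (s : Set ℝ) (h : ℝ) : ℝ :=
  sSup {d : ℝ | ∃ x ∈ s, ∃ y ∈ s, |x - y| ≤ h ∧ d = |φ x - φ y|}

section ModulusOfContinuity

variable {φ : ℝ → ℝ} {s : Set ℝ} {h : ℝ}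

theorem IsCompact.bddAbove_modulusOfContinuity_set (hs : IsCompact s) (hφ : ContinuousOn φ s) :
    BddAbove {d : ℝ | ∃ x ∈ s, ∃ y ∈ s, |x - y| ≤ h ∧ d = |φ x - φ y|} := by
  have hc : ContinuousOn (fun p : ℝ × ℝ => |φ p.1 - φ p.2|) (s ×ˢ s) :=
    ((hφ.comp continuousOn_fst fun _ hp => hp.1).sub
      (hφ.comp continuousOn_snd fun _ hp => hp.2)).abs
  refine ((hs.prod hs).bddAbove_image hc).mono ?_
  rintro d ⟨x, hx, y, hy, -, rfl⟩
  exact ⟨(x, y), ⟨hx, hy⟩, rfl⟩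

theorem abs_sub_le_modulusOfContinuity (hs : IsCompact s) (hφ : ContinuousOn φ s)
    {x y : ℝ} (hx : x ∈ s) (hy : y ∈ s) (hxy : |x - y| ≤ h) :
    |φ x - φ y| ≤ modulusOfContinuity φ s h :=
  le_csSup (hs.bddAbove_modulusOfContinuity_set hφ) ⟨x, hx, y, hy, hxy, rfl⟩

theorem modulusOfContinuity_nonneg (hs : IsCompact s) (hφ : ContinuousOn φ s)
    (hne : s.Nonempty) (hh : 0 ≤ h) : 0 ≤ modulusOfContinuity φ s h := by
  obtain ⟨x, hx⟩ := hne
  simpa using abs_sub_le_modulusOfContinuity hs hφ hx hx (by simpa using hh)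

end ModulusOfContinuity

theorem abs_weighted_ratio_sub_le {m a b K N : ℝ} (hm : 0 < m) (ha : m ≤ a) (hb : m ≤ b)
    (hK : 0 ≤ K) (hKN : K ≤ N) :
    |K * a / (K * a + (N - K) * b) - K / N| ≤ |a - b| / (4 * m) := by
  rcases hK.eq_or_lt with rfl | hK
  · simp only [zero_mul, zero_div, sub_self, abs_zero]
    positivity
  have hN : 0 < N := hK.trans_le hKN
  set D := K * a + (N - K) * b
  have hD : N * m ≤ D := by nlinarith
  have hD0 : 0 < D := (by positivity : 0 < N * m).trans_le hD
  have key : K * a / D - K / N = K * (N - K) * (a - b) / (N * D) := by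
    field_simp
    ring
  have hAMGM : 4 * (K * (N - K)) ≤ N ^ 2 := by nlinarith [sq_nonneg (N - 2 * K)]
  rw [key, abs_div, abs_mul, abs_of_pos (by positivity : 0 < N * D),
    abs_of_nonneg (by nlinarith : 0 ≤ K * (N - K)), div_le_div_iff₀ (by positivity) (by positivity)]
  calc K * (N - K) * |a - b| * (4 * m) = 4 * (K * (N - K)) * (m * |a - b|) := by ring
    _ ≤ N ^ 2 * (m * |a - b|) := by gcongr
    _ = |a - b| * (N * (N * m)) := by ring
    _ ≤ |a - b| * (N * D) := by gcongr

theorem div_mem_Icc_zero_one {a b : ℝ} (ha : 0 ≤ a) (hab : a ≤ b) : a / b ∈ Icc (0 : ℝ) 1 :=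
  ⟨div_nonneg ha (ha.trans hab), div_le_one_of_le₀ hab (ha.trans hab)⟩

/-- For continuous `φ ≥ m > 0` on `[0,1]` and the nodes
`ξ k = k φ((k-1)/(n-1)) / (k φ((k-1)/(n-1)) + (n-k) φ(k/(n-1)))` for `1 ≤ k ≤ n-1`,
`ξ 0 = 0`, `ξ n = 1`, one has `|ξ k - k/n| ≤ (1/(4m)) ω₁(φ, 1/(n-1))` for all `k ≤ n`. -/
theorem stmt15 (n : ℕ) (hn : 2 ≤ n) (φ : ℝ → ℝ) (m : ℝ) (hm : 0 < m)
    (hφc : ContinuousOn φ (Set.Icc (0 : ℝ) 1))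
    (hφm : ∀ x ∈ Set.Icc (0 : ℝ) 1, m ≤ φ x)
    (ω : ℝ)
    (hω : ω = sSup {d : ℝ | ∃ x ∈ Set.Icc (0 : ℝ) 1, ∃ y ∈ Set.Icc (0 : ℝ) 1,
      |x - y| ≤ 1 / ((n : ℝ) - 1) ∧ d = |φ x - φ y|})
    (ξ : ℕ → ℝ) (hξ0 : ξ 0 = 0) (hξn : ξ n = 1)
    (hξ : ∀ k : ℕ, 1 ≤ k → k ≤ n - 1 →
      ξ k = (k : ℝ) * φ (((k : ℝ) - 1) / ((n : ℝ) - 1)) /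
        ((k : ℝ) * φ (((k : ℝ) - 1) / ((n : ℝ) - 1)) + ((n : ℝ) - (k : ℝ)) * φ ((k : ℝ) / ((n : ℝ) - 1)))) :
    ∀ k : ℕ, k ≤ n → |ξ k - (k : ℝ) / (n : ℝ)| ≤ 1 / (4 * m) * ω := by
  change ω = modulusOfContinuity φ (Icc 0 1) (1 / ((n : ℝ) - 1)) at hω
  have hn' : (2 : ℝ) ≤ n := by exact_mod_cast hn
  have hn1 : (0 : ℝ) < n - 1 := by linarith
  have hω0 : 0 ≤ ω := hω ▸ modulusOfContinuity_nonneg isCompact_Icc hφc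
    (nonempty_Icc.2 zero_le_one) (one_div_pos.2 hn1).le
  intro k hk
  obtain rfl | hk1 := k.eq_zero_or_pos
  · simpa [hξ0] using by positivity
  obtain hkn | hkn := hk.eq_or_lt
  · rw [hkn, hξn, div_self (by linarith : (0 : ℝ) < n).ne', sub_self, abs_zero]
    positivity
  have hk' : (1 : ℝ) ≤ k := by exact_mod_cast hk1
  have hkn' : (k : ℝ) + 1 ≤ n := by exact_mod_cast hkn
  have hl := div_mem_Icc_zero_one (b := (n : ℝ) - 1) (sub_nonneg.2 hk') (by linarith)
  have hr := div_mem_Icc_zero_one (b := (n : ℝ) - 1) (a := k) (by linarith) (by linarith)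
  have hlr : |((k : ℝ) - 1) / (n - 1) - k / (n - 1)| ≤ 1 / ((n : ℝ) - 1) := by
    rw [← sub_div, sub_sub_cancel_left, neg_div, abs_neg, abs_div, abs_one, abs_of_pos hn1]
  rw [hξ k hk1 (by omega)]
  calc _ ≤ |φ (((k : ℝ) - 1) / (n - 1)) - φ (k / (n - 1))| / (4 * m) :=
        abs_weighted_ratio_sub_le hm (hφm _ hl) (hφm _ hr) (by positivity) (by linarith)
    _ ≤ ω / (4 * m) := by
        gcongr
        exact hω ▸ abs_sub_le_modulusOfContinuity isCompact_Icc hφc hl hr hlr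
    _ = 1 / (4 * m) * ω := by ring
end

section
/- With the nodes x_{n,k} of the previous statement, the mesh satisfies Δ_n = max_{0 ≤ k ≤ n−1} |x_{n,k+1} − x_{n,k}| ≤ (1/(2m))·ω₁(φ, 1/(n−1)) + 1/n. -/
/-! With `a = (k-1)/(n-1)`, `b = k/(n-1)` and `D = k φ(a) + (n - k) φ(b)` the denominator of
`x_{n,k}`, one has `x_{n,k} - k/n = k (n - k) (φ(a) - φ(b)) / (n D)`. Since `k (n - k) ≤ n²/4`,
`D ≥ n m` and `|a - b| = 1/(n-1)`, every node lies within `ω/(4m)` of the uniform node `k/n`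
(`ω` is a genuine supremum because `φ` is bounded on `[0,1]`). Two consecutive nodes are then at
distance at most `ω/(4m) + 1/n + ω/(4m)`. -/

open Set

theorem bddAbove_abs_sub_of_continuousOn {s : Set ℝ} (hs : IsCompact s) {φ : ℝ → ℝ}
    (hφ : ContinuousOn φ s) (δ : ℝ) :
    BddAbove {d : ℝ | ∃ x ∈ s, ∃ y ∈ s, |x - y| ≤ δ ∧ d = |φ x - φ y|} := by
  obtain ⟨C, hC⟩ := hs.exists_bound_of_continuousOn hφ
  refine ⟨2 * C, ?_⟩
  rintro d ⟨x, hx, y, hy, -, rfl⟩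
  have hx' := hC x hx
  have hy' := hC y hy
  rw [Real.norm_eq_abs] at hx' hy'
  linarith [abs_sub (φ x) (φ y)]

theorem abs_sub_le_sSup_of_continuousOn {s : Set ℝ} (hs : IsCompact s) {φ : ℝ → ℝ}
    (hφ : ContinuousOn φ s) {δ x y : ℝ} (hx : x ∈ s) (hy : y ∈ s) (hxy : |x - y| ≤ δ) :
    |φ x - φ y| ≤ sSup {d : ℝ | ∃ x ∈ s, ∃ y ∈ s, |x - y| ≤ δ ∧ d = |φ x - φ y|} :=
  le_csSup (bddAbove_abs_sub_of_continuousOn hs hφ δ) ⟨x, hx, y, hy, hxy, rfl⟩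

theorem abs_mul_div_weighted_sub_div_le {k n p q m w : ℝ} (hn : 0 < n) (hk : 0 ≤ k)
    (hkn : k ≤ n) (hm : 0 < m) (hp : m ≤ p) (hq : m ≤ q) (hpq : |p - q| ≤ w) :
    |k * p / (k * p + (n - k) * q) - k / n| ≤ w / (4 * m) := by
  have hD : n * m ≤ k * p + (n - k) * q := by nlinarith
  have hDpos : 0 < k * p + (n - k) * q := lt_of_lt_of_le (by positivity) hD
  have hkk : k * (n - k) ≤ n ^ 2 / 4 := by nlinarith [sq_nonneg (n - 2 * k)]
  rw [div_sub_div _ _ hDpos.ne' hn.ne',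
    show k * p * n - (k * p + (n - k) * q) * k = k * (n - k) * (p - q) by ring,
    abs_div, abs_of_pos (by positivity : 0 < (k * p + (n - k) * q) * n),
    abs_mul (k * (n - k)), abs_of_nonneg (by nlinarith : 0 ≤ k * (n - k)),
    div_le_div_iff₀ (by positivity) (by positivity)]
  have hw : 0 ≤ w := (abs_nonneg _).trans hpq
  calc k * (n - k) * |p - q| * (4 * m) ≤ n ^ 2 / 4 * w * (4 * m) := by gcongr
    _ = w * (n * m * n) := by ring
    _ ≤ w * ((k * p + (n - k) * q) * n) := by gcongr

theorem abs_sub_succ_le_of_abs_sub_div_le {ξ : ℕ → ℝ} {n k : ℕ} {ε : ℝ}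
    (hξ : ∀ j ≤ n, |ξ j - j / n| ≤ ε) (hk : k < n) :
    |ξ (k + 1) - ξ k| ≤ 2 * ε + 1 / n := by
  have h₁ := hξ (k + 1) hk
  have h₂ := hξ k hk.le
  have hstep : |((k + 1 : ℕ) : ℝ) / n - k / n| = 1 / n := by
    have : (0 : ℝ) < n := by exact_mod_cast hk.pos
    push_cast
    rw [← sub_div, add_sub_cancel_left, abs_of_pos (by positivity)]
  have h₃ := abs_sub_le (ξ (k + 1)) ((k + 1 : ℕ) / n) (ξ k)
  have h₄ := abs_sub_le (((k + 1 : ℕ) : ℝ) / n) (k / n) (ξ k)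
  rw [abs_sub_comm] at h₂
  linarith

theorem abs_node_sub_div_le {n : ℕ} (hn : 2 ≤ n) {φ : ℝ → ℝ} {m ω : ℝ} (hm : 0 < m)
    (hφm : ∀ x ∈ Icc (0 : ℝ) 1, m ≤ φ x)
    (hosc : ∀ x ∈ Icc (0 : ℝ) 1, ∀ y ∈ Icc (0 : ℝ) 1, |x - y| ≤ 1 / ((n : ℝ) - 1) →
      |φ x - φ y| ≤ ω)
    {ξ : ℕ → ℝ} (hξ0 : ξ 0 = 0) (hξn : ξ n = 1)
    (hξ : ∀ k : ℕ, 1 ≤ k → k ≤ n - 1 →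
      ξ k = (k : ℝ) * φ (((k : ℝ) - 1) / ((n : ℝ) - 1)) /
        ((k : ℝ) * φ (((k : ℝ) - 1) / ((n : ℝ) - 1)) + ((n : ℝ) - (k : ℝ)) * φ ((k : ℝ) / ((n : ℝ) - 1))))
    {k : ℕ} (hk : k ≤ n) :
    |ξ k - k / n| ≤ ω / (4 * m) := by
  have hn' : (2 : ℝ) ≤ n := by exact_mod_cast hn
  have hn1 : (0 : ℝ) < n - 1 := by linarith
  have hω0 : 0 ≤ ω := (abs_nonneg _).trans
    (hosc 0 (left_mem_Icc.2 zero_le_one) 0 (left_mem_Icc.2 zero_le_one) (by rw [sub_self, abs_zero]; positivity))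
  rcases Nat.eq_zero_or_pos k with rfl | hk1
  · simp only [hξ0, Nat.cast_zero, zero_div, sub_zero, abs_zero]
    positivity
  rcases hk.eq_or_lt with rfl | hkn
  · rw [hξn, div_self (by positivity), sub_self, abs_zero]
    positivity
  have hk1' : (1 : ℝ) ≤ k := by exact_mod_cast hk1
  have hkn' : (k : ℝ) ≤ n - 1 := by
    have : (k : ℝ) + 1 ≤ n := by exact_mod_cast hkn
    linarith
  have ha : ((k : ℝ) - 1) / (n - 1) ∈ Icc (0 : ℝ) 1 :=
    ⟨div_nonneg (by linarith) hn1.le, (div_le_one hn1).2 (by linarith)⟩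
  have hb : (k : ℝ) / (n - 1) ∈ Icc (0 : ℝ) 1 := ⟨by positivity, (div_le_one hn1).2 hkn'⟩
  have hab : |((k : ℝ) - 1) / (n - 1) - k / (n - 1)| ≤ 1 / (n - 1) := by
    rw [← sub_div, sub_sub_cancel_left, abs_div, abs_neg, abs_one, abs_of_pos hn1]
  rw [hξ k hk1 (by omega)]
  exact abs_mul_div_weighted_sub_div_le (by positivity) (by positivity) (by linarith) hm
    (hφm _ ha) (hφm _ hb) (hosc _ ha _ hb hab)

/-- With the nodes of Statement 15, the mesh satisfies
`Δ_n = max_{0 ≤ k ≤ n-1} |ξ (k+1) - ξ k| ≤ (1/(2m)) ω₁(φ, 1/(n-1)) + 1/n`. -/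
theorem stmt16 (n : ℕ) (hn : 2 ≤ n) (φ : ℝ → ℝ) (m : ℝ) (hm : 0 < m)
    (hφc : ContinuousOn φ (Set.Icc (0 : ℝ) 1))
    (hφm : ∀ x ∈ Set.Icc (0 : ℝ) 1, m ≤ φ x)
    (ω : ℝ)
    (hω : ω = sSup {d : ℝ | ∃ x ∈ Set.Icc (0 : ℝ) 1, ∃ y ∈ Set.Icc (0 : ℝ) 1,
      |x - y| ≤ 1 / ((n : ℝ) - 1) ∧ d = |φ x - φ y|})
    (ξ : ℕ → ℝ) (hξ0 : ξ 0 = 0) (hξn : ξ n = 1)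
    (hξ : ∀ k : ℕ, 1 ≤ k → k ≤ n - 1 →
      ξ k = (k : ℝ) * φ (((k : ℝ) - 1) / ((n : ℝ) - 1)) /
        ((k : ℝ) * φ (((k : ℝ) - 1) / ((n : ℝ) - 1)) + ((n : ℝ) - (k : ℝ)) * φ ((k : ℝ) / ((n : ℝ) - 1))))
    (Δ : ℝ) (hΔ : IsGreatest {d : ℝ | ∃ k < n, d = |ξ (k + 1) - ξ k|} Δ) :
    Δ ≤ 1 / (2 * m) * ω + 1 / (n : ℝ) := by
  obtain ⟨⟨k, hk, rfl⟩, -⟩ := hΔ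
  have hosc : ∀ x ∈ Icc (0 : ℝ) 1, ∀ y ∈ Icc (0 : ℝ) 1, |x - y| ≤ 1 / ((n : ℝ) - 1) →
      |φ x - φ y| ≤ ω := fun x hx y hy hxy =>
    hω ▸ abs_sub_le_sSup_of_continuousOn isCompact_Icc hφc hx hy hxy
  calc |ξ (k + 1) - ξ k| ≤ 2 * (ω / (4 * m)) + 1 / n :=
        abs_sub_succ_le_of_abs_sub_div_le
          (fun j hj => abs_node_sub_div_le hn hm hφm hosc hξ0 hξn hξ hj) hk
    _ = 1 / (2 * m) * ω + 1 / n := by field_simp; ring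
end

section
/- With nodes x_{n,k} = √(k/n), the associated weights γ_{n-1,k} = ∏_{l=1}^{k} (1−x_{n,l})/x_{n,l} satisfy γ_{n-1,k} ≤ C(n−1,k)/2^k for 1 ≤ k ≤ n−1, and consequently Q_{n-1}(x) = ∑_{k=0}^{n-1} γ_{n-1,k} x^k(1−x)^{n-1-k} ≤ (1 − x/2)^{n-1} for x ∈ [0,1]. -/
/-!
Writing `ξ l = √(l/n)`, each factor satisfies `(1 - ξ l)/ξ l ≤ (1 - ξ l ^ 2)/(2 ξ l ^ 2) = (n - l)/(2l)`
(the gap is `(1 - ξ l)² / (2 ξ l²) ≥ 0`), and `∏_{l ≤ k} (n - l)/l = C(n-1, k)`. Bounding the weights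
termwise then turns `Q_{n-1}(x)` into at most the binomial expansion of `(x/2 + (1 - x))^(n-1)`.
-/

open Finset

theorem one_sub_div_le_one_sub_sq_div {s : ℝ} (hs : 0 < s) :
    (1 - s) / s ≤ (1 - s ^ 2) / (2 * s ^ 2) := by
  rw [div_le_div_iff₀ hs (by positivity)]
  nlinarith [mul_nonneg hs.le (sq_nonneg (1 - s))]

theorem one_sub_sqrt_div_div_sqrt_div_le {a b : ℝ} (ha : 0 < a) (hb : 0 < b) :
    (1 - √(a / b)) / √(a / b) ≤ (b - a) / (2 * a) := by
  have hs := one_sub_div_le_one_sub_sq_div (Real.sqrt_pos.2 (div_pos ha hb))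
  rwa [Real.sq_sqrt (div_pos ha hb).le, show (1 - a / b) / (2 * (a / b)) = (b - a) / (2 * a) by
    field_simp] at hs

theorem prod_Icc_sub_div_two_mul_eq_choose (m k : ℕ) :
    ∏ l ∈ Icc 1 k, ((m + 1 : ℝ) - l) / (2 * l) = m.choose k / 2 ^ k := by
  induction k with
  | zero => simp
  | succ k ih =>
    have hchoose : (m.choose (k + 1) : ℝ) * (k + 1) = m.choose k * (m - k) := by
      rcases le_or_gt k m with hkm | hmk
      · have h := congrArg (Nat.cast : ℕ → ℝ) (m.choose_succ_right_eq k)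
        push_cast [Nat.cast_sub hkm] at h
        exact h
      · simp [Nat.choose_eq_zero_of_lt hmk, Nat.choose_eq_zero_of_lt (hmk.trans k.lt_succ_self)]
    rw [prod_Icc_succ_top (by omega), ih]
    field_simp
    push_cast
    linear_combination (-(2 : ℝ) ^ (k + 1)) * hchoose

theorem prod_one_sub_sqrt_div_le_choose {n k : ℕ} (hk : k < n) :
    ∏ l ∈ Icc 1 k, (1 - √((l : ℝ) / n)) / √((l : ℝ) / n) ≤ ((n - 1).choose k : ℝ) / 2 ^ k := by
  obtain ⟨m, rfl⟩ : ∃ m, n = m + 1 := ⟨n - 1, by omega⟩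
  rw [add_tsub_cancel_right, ← prod_Icc_sub_div_two_mul_eq_choose, Nat.cast_succ]
  refine prod_le_prod (fun l hl => ?_) (fun l hl => ?_)
  all_goals
    have hl1 : (1 : ℝ) ≤ l := by exact_mod_cast (mem_Icc.1 hl).1
  · have hln : (l : ℝ) ≤ m + 1 := by exact_mod_cast (by grind : l ≤ m + 1)
    have hξ : √((l : ℝ) / (m + 1)) ≤ 1 := Real.sqrt_le_one.2 ((div_le_one (by positivity)).2 hln)
    exact div_nonneg (by linarith) (Real.sqrt_nonneg _)
  · exact one_sub_sqrt_div_div_sqrt_div_le (by linarith) (by positivity)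

theorem sum_mul_pow_le_one_sub_half_pow {m : ℕ} {γ : ℕ → ℝ}
    (hγ : ∀ k < m + 1, γ k ≤ (m.choose k : ℝ) / 2 ^ k) {x : ℝ} (hx0 : 0 ≤ x) (hx1 : x ≤ 1) :
    ∑ k ∈ range (m + 1), γ k * x ^ k * (1 - x) ^ (m - k) ≤ (1 - x / 2) ^ m := by
  rw [show 1 - x / 2 = x / 2 + (1 - x) by ring, add_pow]
  refine sum_le_sum fun k hk => ?_
  calc γ k * x ^ k * (1 - x) ^ (m - k)
      ≤ (m.choose k : ℝ) / 2 ^ k * x ^ k * (1 - x) ^ (m - k) := by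
        gcongr
        exact hγ k (mem_range.1 hk)
    _ = (x / 2) ^ k * (1 - x) ^ (m - k) * m.choose k := by rw [div_pow]; ring

theorem stmt18_general (n : ℕ) (ξ γ : ℕ → ℝ)
    (hξ : ∀ l : ℕ, ξ l = Real.sqrt ((l : ℝ) / (n : ℝ)))
    (hγ : ∀ k : ℕ, γ k = ∏ l ∈ Finset.Icc 1 k, (1 - ξ l) / ξ l) :
    (∀ k : ℕ, 1 ≤ k → k ≤ n - 1 → γ k ≤ ((n - 1).choose k : ℝ) / 2 ^ k) ∧
    ∀ x ∈ Set.Icc (0 : ℝ) 1,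
      ∑ k ∈ Finset.range n, γ k * x ^ k * (1 - x) ^ (n - 1 - k) ≤ (1 - x / 2) ^ (n - 1) := by
  have hγ_le : ∀ k < n, γ k ≤ ((n - 1).choose k : ℝ) / 2 ^ k := fun k hk => by
    simpa only [hγ, hξ] using prod_one_sub_sqrt_div_le_choose hk
  refine ⟨fun k hk1 hkn => hγ_le k (by omega), fun x hx => ?_⟩
  obtain _ | m := n
  · simp
  · simpa using sum_mul_pow_le_one_sub_half_pow (by simpa using hγ_le) hx.1 hx.2

/-- With nodes `ξ l = √(l/n)`, the weights
`γ k = ∏_{l=1}^{k} (1 - ξ l)/ξ l` satisfy `γ k ≤ C(n-1,k)/2^k` for `1 ≤ k ≤ n-1`, and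
consequently `Q x = ∑_{k=0}^{n-1} γ k x^k (1-x)^(n-1-k) ≤ (1 - x/2)^(n-1)` on `[0,1]`. -/
theorem stmt18 (n : ℕ) (hn : 1 ≤ n) (ξ γ : ℕ → ℝ)
    (hξ : ∀ l : ℕ, ξ l = Real.sqrt ((l : ℝ) / (n : ℝ)))
    (hγ : ∀ k : ℕ, γ k = ∏ l ∈ Finset.Icc 1 k, (1 - ξ l) / ξ l) :
    (∀ k : ℕ, 1 ≤ k → k ≤ n - 1 → γ k ≤ ((n - 1).choose k : ℝ) / 2 ^ k) ∧
    ∀ x ∈ Set.Icc (0 : ℝ) 1,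
      ∑ k ∈ Finset.range n, γ k * x ^ k * (1 - x) ^ (n - 1 - k) ≤ (1 - x / 2) ^ (n - 1) :=
  stmt18_general n ξ γ hξ hγ
end
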